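/- arXiv:1209.3430 — 2 statements merged into one kernel-verified Lean document; each statement's English description precedes it below -/
import Mathlib

section
/- Let ε = (ε¹₁,ε¹₂,ε²₁,ε²₂) ∈ [0,1/2]⁴. Then the following are equivalent: (a) for every p ∈ [0,1/2]⁴ with (p, ε) ∈ ELFP, one has max S₁p ≤ 1/2 (the Bell/CHSH inequalities); (b) 1 ∈ S₀ε. (This characterizes the set Force for the classical ('class') constraint.) -/
open Finset

/-- The signed sum `±(x₁₁−¼) ± (x₁₂−¼) ± (x₂₁−¼) ± (x₂₂−¼)` over the four components of `x`,
with a `+` sign exactly where the sign choice `s` is `true`. -/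
noncomputable def Sval (x : Fin 2 → Fin 2 → ℝ) (s : Fin 2 → Fin 2 → Bool) : ℝ :=
  ∑ i : Fin 2, ∑ j : Fin 2, (if s i j then (1 : ℝ) else -1) * (x i j - 1 / 4)

/-- The number of `+` signs in a sign choice. -/
def plusCount (s : Fin 2 → Fin 2 → Bool) : ℕ :=
  (Finset.univ.filter fun ij : Fin 2 × Fin 2 => s ij.1 ij.2 = true).card

/-- `max Sx`: the maximum of the signed sums over all 16 sign choices. -/
noncomputable def maxS (x : Fin 2 → Fin 2 → ℝ) : ℝ :=
  Finset.univ.sup' Finset.univ_nonempty (Sval x)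

/-- `max S₀x`: the maximum over sign choices with an even number of `+` signs. -/
noncomputable def maxS0 (x : Fin 2 → Fin 2 → ℝ) : ℝ :=
  (Finset.univ.filter fun s : Fin 2 → Fin 2 → Bool => Even (plusCount s)).sup'
    ⟨fun _ _ => false, by decide⟩ (Sval x)

/-- `max S₁x`: the maximum over sign choices with an odd number of `+` signs. -/
noncomputable def maxS1 (x : Fin 2 → Fin 2 → ℝ) : ℝ :=
  (Finset.univ.filter fun s : Fin 2 → Fin 2 → Bool => ¬ Even (plusCount s)).sup'
    ⟨fun i j => i == 0 && j == 0, by decide⟩ (Sval x)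

/-- `r ∈ S₀x`: `r` is one of the signed sums with an even number of `+` signs. -/
def memS0 (x : Fin 2 → Fin 2 → ℝ) (r : ℝ) : Prop :=
  ∃ s : Fin 2 → Fin 2 → Bool, Even (plusCount s) ∧ Sval x s = r

/-- The Extended Linear Feasibility Polytope: `(p, ε) ∈ ELFP` iff there is a joint
distribution on `({−1,+1})⁸` — encoded as `Fin 2 → Fin 2 → Fin 2 → Bool`, `h k i j` being the
value of `Hᵏᵢⱼ` (`true` standing for `+1`) — with uniform ±1 one-dimensional marginals,
`Pr[H¹ᵢⱼ = +1, H²ᵢⱼ = +1] = p i j`, `Pr[H¹ᵢ₁ = +1, H¹ᵢ₂ = +1] = ε 0 i`, and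
`Pr[H²₁ⱼ = +1, H²₂ⱼ = +1] = ε 1 j`. -/
def ELFP (p ε : Fin 2 → Fin 2 → ℝ) : Prop :=
  ∃ μ : (Fin 2 → Fin 2 → Fin 2 → Bool) → ℝ,
    (∀ h, 0 ≤ μ h) ∧
    (∑ h : Fin 2 → Fin 2 → Fin 2 → Bool, μ h = 1) ∧
    (∀ k i j : Fin 2,
      ∑ h ∈ Finset.univ.filter
          (fun h : Fin 2 → Fin 2 → Fin 2 → Bool => h k i j = true), μ h = 1 / 2) ∧
    (∀ i j : Fin 2,
      ∑ h ∈ Finset.univ.filter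
          (fun h : Fin 2 → Fin 2 → Fin 2 → Bool => h 0 i j = true ∧ h 1 i j = true), μ h
        = p i j) ∧
    (∀ i : Fin 2,
      ∑ h ∈ Finset.univ.filter
          (fun h : Fin 2 → Fin 2 → Fin 2 → Bool => h 0 i 0 = true ∧ h 0 i 1 = true), μ h
        = ε 0 i) ∧
    (∀ j : Fin 2,
      ∑ h ∈ Finset.univ.filter
          (fun h : Fin 2 → Fin 2 → Fin 2 → Bool => h 1 0 j = true ∧ h 1 1 j = true), μ h
        = ε 1 j)

/- ============ auxiliary machinery ============ -/

abbrev HH8 := Fin 2 → Fin 2 → Fin 2 → Bool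

noncomputable def qw (a : ℝ) (t : Bool) : ℝ := if t then (1+a)/2 else (1-a)/2

lemma qw_nonneg {a : ℝ} (h1 : -1 ≤ a) (h2 : a ≤ 1) (t : Bool) : 0 ≤ qw a t := by
  cases t <;> simp [qw] <;> linarith

noncomputable def mkD (a b c d : ℝ)
    (cfg : Bool → Bool → Bool → Bool → Bool → HH8) : HH8 → ℝ :=
  fun h => ∑ x : Bool, ∑ u : Bool, ∑ v : Bool, ∑ y : Bool, ∑ z : Bool,
    if h = cfg x u v y z then 1/2 * qw a u * qw b v * qw c y * qw d z else 0

lemma mk_nonneg {a b c d : ℝ} (ha : -1 ≤ a) (ha' : a ≤ 1) (hb : -1 ≤ b) (hb' : b ≤ 1)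
    (hc : -1 ≤ c) (hc' : c ≤ 1) (hd : -1 ≤ d) (hd' : d ≤ 1)
    (cfg : Bool → Bool → Bool → Bool → Bool → HH8) (h : HH8) : 0 ≤ mkD a b c d cfg h := by
  unfold mkD
  refine Finset.sum_nonneg fun x _ => Finset.sum_nonneg fun u _ => Finset.sum_nonneg fun v _ =>
    Finset.sum_nonneg fun y _ => Finset.sum_nonneg fun z _ => ?_
  split
  · have := qw_nonneg ha ha' u; have := qw_nonneg hb hb' v
    have := qw_nonneg hc hc' y; have := qw_nonneg hd hd' z
    positivity
  · exact le_refl _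

lemma mk_filter (a b c d : ℝ) (cfg : Bool → Bool → Bool → Bool → Bool → HH8)
    (P : HH8 → Prop) [DecidablePred P] :
    ∑ h ∈ Finset.univ.filter P, mkD a b c d cfg h
      = ∑ x : Bool, ∑ u : Bool, ∑ v : Bool, ∑ y : Bool, ∑ z : Bool,
          if P (cfg x u v y z) then 1/2 * qw a u * qw b v * qw c y * qw d z else 0 := by
  rw [Finset.sum_filter]
  unfold mkD
  have step : ∀ h : HH8, (if P h then (∑ x : Bool, ∑ u : Bool, ∑ v : Bool, ∑ y : Bool, ∑ z : Bool,
      if h = cfg x u v y z then 1/2 * qw a u * qw b v * qw c y * qw d z else 0) else 0)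
      = ∑ x : Bool, ∑ u : Bool, ∑ v : Bool, ∑ y : Bool, ∑ z : Bool,
      if h = cfg x u v y z then (if P h then 1/2 * qw a u * qw b v * qw c y * qw d z else 0) else 0 := by
    intro h; by_cases hP : P h <;> simp [hP]
  rw [Finset.sum_congr rfl fun h _ => step h]
  rw [Finset.sum_comm]
  refine Finset.sum_congr rfl fun x _ => ?_
  rw [Finset.sum_comm]
  refine Finset.sum_congr rfl fun u _ => ?_
  rw [Finset.sum_comm]
  refine Finset.sum_congr rfl fun v _ => ?_
  rw [Finset.sum_comm]
  refine Finset.sum_congr rfl fun y _ => ?_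
  rw [Finset.sum_comm]
  refine Finset.sum_congr rfl fun z _ => ?_
  rw [Finset.sum_ite_eq' Finset.univ (cfg x u v y z)]
  simp

lemma mk_univ (a b c d : ℝ) (cfg : Bool → Bool → Bool → Bool → Bool → HH8) :
    ∑ h : HH8, mkD a b c d cfg h
      = ∑ x : Bool, ∑ u : Bool, ∑ v : Bool, ∑ y : Bool, ∑ z : Bool,
          (1/2 * qw a u * qw b v * qw c y * qw d z : ℝ) := by
  rw [show (Finset.univ : Finset HH8) = Finset.univ.filter (fun _ => True) by simp]
  rw [mk_filter]; simp

/- ============ the five constructions ============ -/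

noncomputable def epsM (a1 a2 b1 b2 : ℝ) : Fin 2 → Fin 2 → ℝ :=
  ![![(1+a1)/4, (1+a2)/4], ![(1+b1)/4, (1+b2)/4]]

def cfgA (x u v y z : Bool) : HH8 :=
  ![![![x, x == u], ![x, x == v]], ![![x, x == u], ![x == y, (x == u) == z]]]
noncomputable def pA (a1 a2 b1 b2 : ℝ) : Fin 2 → Fin 2 → ℝ :=
  ![![1/2, 1/2], ![(1+b1)/4, (1+a1*a2*b2)/4]]

def cfgB (x u v y z : Bool) : HH8 :=
  ![![![x == u, x], ![x == v, x]], ![![x == u, x], ![(x == u) == z, x == y]]]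
noncomputable def pB (a1 a2 b1 b2 : ℝ) : Fin 2 → Fin 2 → ℝ :=
  ![![1/2, 1/2], ![(1+a1*a2*b1)/4, (1+b2)/4]]

def cfgC (x u v y z : Bool) : HH8 :=
  ![![![x, x == y], ![x == u, (x == u) == z]], ![![x, x], ![x == u, x == v]]]
noncomputable def pC (a1 a2 b1 b2 : ℝ) : Fin 2 → Fin 2 → ℝ :=
  ![![1/2, (1+a1)/4], ![1/2, (1+a2*b1*b2)/4]]

def cfgD (x u v y z : Bool) : HH8 :=
  ![![![x == u, (x == u) == z], ![x, x == y]], ![![x == u, x == v], ![x, x]]]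
noncomputable def pD (a1 a2 b1 b2 : ℝ) : Fin 2 → Fin 2 → ℝ :=
  ![![1/2, (1+a1*b1*b2)/4], ![1/2, (1+a2)/4]]

def cfgE (x u _v _y _z : Bool) : HH8 :=
  ![![![x, u], ![u, x]], ![![x, u], ![u, !x]]]
noncomputable def pE : Fin 2 → Fin 2 → ℝ :=
  ![![1/2, 1/2], ![1/2, 0]]

lemma elfpA (a1 a2 b1 b2 : ℝ) (h1 : -1 ≤ a1) (h1' : a1 ≤ 1) (h2 : -1 ≤ a2) (h2' : a2 ≤ 1)
    (h3 : -1 ≤ b1) (h3' : b1 ≤ 1) (h4 : -1 ≤ b2) (h4' : b2 ≤ 1) :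
    ELFP (pA a1 a2 b1 b2) (epsM a1 a2 b1 b2) := by
  refine ⟨mkD a1 a2 b1 b2 cfgA, mk_nonneg h1 h1' h2 h2' h3 h3' h4 h4' _, ?_, ?_, ?_, ?_, ?_⟩
  · rw [mk_univ]; simp [Fintype.sum_bool, qw]; try ring
  · intro k i j
    fin_cases k <;> fin_cases i <;> fin_cases j <;>
      · rw [mk_filter]; simp [Fintype.sum_bool, cfgA, qw]; try ring
  · intro i j
    fin_cases i <;> fin_cases j <;>
      · rw [mk_filter]; simp [Fintype.sum_bool, cfgA, qw, pA]; try ring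
  · intro i
    fin_cases i <;>
      · rw [mk_filter]; simp [Fintype.sum_bool, cfgA, qw, epsM]; try ring
  · intro j
    fin_cases j <;>
      · rw [mk_filter]; simp [Fintype.sum_bool, cfgA, qw, epsM]; try ring

lemma elfpB (a1 a2 b1 b2 : ℝ) (h1 : -1 ≤ a1) (h1' : a1 ≤ 1) (h2 : -1 ≤ a2) (h2' : a2 ≤ 1)
    (h3 : -1 ≤ b1) (h3' : b1 ≤ 1) (h4 : -1 ≤ b2) (h4' : b2 ≤ 1) :
    ELFP (pB a1 a2 b1 b2) (epsM a1 a2 b1 b2) := by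
  refine ⟨mkD a1 a2 b2 b1 cfgB, mk_nonneg h1 h1' h2 h2' h4 h4' h3 h3' _, ?_, ?_, ?_, ?_, ?_⟩
  · rw [mk_univ]; simp [Fintype.sum_bool, qw]; try ring
  · intro k i j
    fin_cases k <;> fin_cases i <;> fin_cases j <;>
      · rw [mk_filter]; simp [Fintype.sum_bool, cfgB, qw]; try ring
  · intro i j
    fin_cases i <;> fin_cases j <;>
      · rw [mk_filter]; simp [Fintype.sum_bool, cfgB, qw, pB]; try ring
  · intro i
    fin_cases i <;>
      · rw [mk_filter]; simp [Fintype.sum_bool, cfgB, qw, epsM]; try ring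
  · intro j
    fin_cases j <;>
      · rw [mk_filter]; simp [Fintype.sum_bool, cfgB, qw, epsM]; try ring

lemma elfpC (a1 a2 b1 b2 : ℝ) (h1 : -1 ≤ a1) (h1' : a1 ≤ 1) (h2 : -1 ≤ a2) (h2' : a2 ≤ 1)
    (h3 : -1 ≤ b1) (h3' : b1 ≤ 1) (h4 : -1 ≤ b2) (h4' : b2 ≤ 1) :
    ELFP (pC a1 a2 b1 b2) (epsM a1 a2 b1 b2) := by
  refine ⟨mkD b1 b2 a1 a2 cfgC, mk_nonneg h3 h3' h4 h4' h1 h1' h2 h2' _, ?_, ?_, ?_, ?_, ?_⟩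
  · rw [mk_univ]; simp [Fintype.sum_bool, qw]; try ring
  · intro k i j
    fin_cases k <;> fin_cases i <;> fin_cases j <;>
      · rw [mk_filter]; simp [Fintype.sum_bool, cfgC, qw]; try ring
  · intro i j
    fin_cases i <;> fin_cases j <;>
      · rw [mk_filter]; simp [Fintype.sum_bool, cfgC, qw, pC]; try ring
  · intro i
    fin_cases i <;>
      · rw [mk_filter]; simp [Fintype.sum_bool, cfgC, qw, epsM]; try ring
  · intro j
    fin_cases j <;>
      · rw [mk_filter]; simp [Fintype.sum_bool, cfgC, qw, epsM]; try ring

lemma elfpD (a1 a2 b1 b2 : ℝ) (h1 : -1 ≤ a1) (h1' : a1 ≤ 1) (h2 : -1 ≤ a2) (h2' : a2 ≤ 1)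
    (h3 : -1 ≤ b1) (h3' : b1 ≤ 1) (h4 : -1 ≤ b2) (h4' : b2 ≤ 1) :
    ELFP (pD a1 a2 b1 b2) (epsM a1 a2 b1 b2) := by
  refine ⟨mkD b1 b2 a2 a1 cfgD, mk_nonneg h3 h3' h4 h4' h2 h2' h1 h1' _, ?_, ?_, ?_, ?_, ?_⟩
  · rw [mk_univ]; simp [Fintype.sum_bool, qw]; try ring
  · intro k i j
    fin_cases k <;> fin_cases i <;> fin_cases j <;>
      · rw [mk_filter]; simp [Fintype.sum_bool, cfgD, qw]; try ring
  · intro i j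
    fin_cases i <;> fin_cases j <;>
      · rw [mk_filter]; simp [Fintype.sum_bool, cfgD, qw, pD]; try ring
  · intro i
    fin_cases i <;>
      · rw [mk_filter]; simp [Fintype.sum_bool, cfgD, qw, epsM]; try ring
  · intro j
    fin_cases j <;>
      · rw [mk_filter]; simp [Fintype.sum_bool, cfgD, qw, epsM]; try ring

lemma elfpE : ELFP pE (epsM 0 0 0 0) := by
  refine ⟨mkD 0 0 0 0 cfgE, mk_nonneg (by norm_num) (by norm_num) (by norm_num) (by norm_num)
    (by norm_num) (by norm_num) (by norm_num) (by norm_num) _, ?_, ?_, ?_, ?_, ?_⟩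
  · rw [mk_univ]; simp [Fintype.sum_bool, qw]; try ring
  · intro k i j
    fin_cases k <;> fin_cases i <;> fin_cases j <;>
      · rw [mk_filter]; simp [Fintype.sum_bool, cfgE, qw]; try ring
  · intro i j
    fin_cases i <;> fin_cases j <;>
      · rw [mk_filter]; simp [Fintype.sum_bool, cfgE, qw, pE]; try ring
  · intro i
    fin_cases i <;>
      · rw [mk_filter]; simp [Fintype.sum_bool, cfgE, qw, epsM]; try ring
  · intro j
    fin_cases j <;>
      · rw [mk_filter]; simp [Fintype.sum_bool, cfgE, qw, epsM]; try ring

set_option linter.unusedVariables false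

lemma fin2cases (m : Fin 2) : m = 0 ∨ m = 1 := by omega

set_option synthInstance.maxHeartbeats 1000000 in
set_option synthInstance.maxSize 2048 in
set_option maxRecDepth 100000 in
set_option maxHeartbeats 1000000 in
theorem keyInt : ∀ s t : Fin 2 → Fin 2 → Bool,
    Even (plusCount s) → ¬ Even (plusCount t) →
    ∀ h : HH8,
    (∀ i, (h 0 i 0 == h 0 i 1) = s 0 i) → (∀ j, (h 1 0 j == h 1 1 j) = s 1 j) →
    (∑ i : Fin 2, ∑ j : Fin 2, (if t i j then (1:ℤ) else -1) *
      ((if h 0 i j then (1:ℤ) else -1) * (if h 1 i j then (1:ℤ) else -1))) ≤ 2 := by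
  decide

lemma keyR (s t : Fin 2 → Fin 2 → Bool) (hs : Even (plusCount s)) (ht : ¬ Even (plusCount t))
    (h : HH8) (r0 : ∀ i, (h 0 i 0 == h 0 i 1) = s 0 i)
    (r1 : ∀ j, (h 1 0 j == h 1 1 j) = s 1 j) :
    (∑ i : Fin 2, ∑ j : Fin 2, (if t i j then (1:ℝ) else -1) *
      ((if h 0 i j then (1:ℝ) else -1) * (if h 1 i j then (1:ℝ) else -1))) ≤ 2 := by
  have hk := keyInt s t hs ht h r0 r1
  have hcast : ((∑ i : Fin 2, ∑ j : Fin 2, (if t i j then (1:ℤ) else -1) *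
      ((if h 0 i j then (1:ℤ) else -1) * (if h 1 i j then (1:ℤ) else -1)) : ℤ) : ℝ)
      = ∑ i : Fin 2, ∑ j : Fin 2, (if t i j then (1:ℝ) else -1) *
      ((if h 0 i j then (1:ℝ) else -1) * (if h 1 i j then (1:ℝ) else -1)) := by
    push_cast [apply_ite (fun z : ℤ => (z : ℝ))]
    norm_num
  rw [← hcast]
  exact_mod_cast hk

lemma filter_zero (μ : HH8 → ℝ) (hnn : ∀ h, 0 ≤ μ h) (P : HH8 → Prop) [DecidablePred P]
    (hz : ∑ h ∈ Finset.univ.filter P, μ h = 0) : ∀ h, P h → μ h = 0 := by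
  intro h hP
  exact (Finset.sum_eq_zero_iff_of_nonneg (fun x _ => hnn x)).mp hz h (by simp [hP])

lemma filter_sub_zero (μ : HH8 → ℝ) (hnn : ∀ h, 0 ≤ μ h) (A B : HH8 → Prop)
    [DecidablePred A] [DecidablePred B] (c : ℝ)
    (hA : ∑ h ∈ Finset.univ.filter A, μ h = c)
    (hAB : ∑ h ∈ Finset.univ.filter (fun h => A h ∧ B h), μ h = c) :
    ∀ h, A h → ¬ B h → μ h = 0 := by
  have hz : ∑ h ∈ Finset.univ.filter (fun h => A h ∧ ¬ B h), μ h = 0 := by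
    have e1 : ∑ h ∈ Finset.univ.filter A, μ h
        = ∑ h ∈ Finset.univ.filter (fun h => A h ∧ B h), μ h
          + ∑ h ∈ Finset.univ.filter (fun h => A h ∧ ¬ B h), μ h := by
      rw [Finset.sum_filter, Finset.sum_filter, Finset.sum_filter, ← Finset.sum_add_distrib]
      refine Finset.sum_congr rfl fun h _ => ?_
      by_cases hA' : A h <;> by_cases hB' : B h <;> simp [hA', hB']
    rw [hA, hAB] at e1; linarith
  intro h h1 h2
  exact filter_zero μ hnn _ hz h ⟨h1, h2⟩

lemma filter_nn_zero (μ : HH8 → ℝ) (hnn : ∀ h, 0 ≤ μ h) (A B : HH8 → Prop)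
    [DecidablePred A] [DecidablePred B]
    (htot : ∑ h : HH8, μ h = 1)
    (hA : ∑ h ∈ Finset.univ.filter A, μ h = 1/2)
    (hB : ∑ h ∈ Finset.univ.filter B, μ h = 1/2)
    (hAB : ∑ h ∈ Finset.univ.filter (fun h => A h ∧ B h), μ h = 0) :
    ∀ h, ¬ A h → ¬ B h → μ h = 0 := by
  have hz : ∑ h ∈ Finset.univ.filter (fun h => ¬ A h ∧ ¬ B h), μ h = 0 := by
    have e1 : ∑ h ∈ Finset.univ.filter (fun h => ¬ A h ∧ ¬ B h), μ h
        = ((∑ h : HH8, μ h - ∑ h ∈ Finset.univ.filter A, μ h)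
          - ∑ h ∈ Finset.univ.filter B, μ h)
          + ∑ h ∈ Finset.univ.filter (fun h => A h ∧ B h), μ h := by
      simp only [Finset.sum_filter]
      rw [← Finset.sum_sub_distrib, ← Finset.sum_sub_distrib, ← Finset.sum_add_distrib]
      refine Finset.sum_congr rfl fun h _ => ?_
      by_cases hA' : A h <;> by_cases hB' : B h <;> simp [hA', hB']
    rw [htot, hA, hB, hAB] at e1; linarith
  intro h h1 h2
  exact filter_zero μ hnn _ hz h ⟨h1, h2⟩

lemma pair_rel (μ : HH8 → ℝ) (hnn : ∀ h, 0 ≤ μ h) (htot : ∑ h : HH8, μ h = 1)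
    (A B : HH8 → Bool)
    (hA : ∑ h ∈ Finset.univ.filter (fun h => A h = true), μ h = 1/2)
    (hB : ∑ h ∈ Finset.univ.filter (fun h => B h = true), μ h = 1/2)
    (b : Bool)
    (hAB : ∑ h ∈ Finset.univ.filter (fun h => A h = true ∧ B h = true), μ h
            = if b then 1/2 else 0) :
    ∀ h, μ h ≠ 0 → (A h == B h) = b := by
  intro h hμ
  cases b
  · simp only [if_neg Bool.false_ne_true, Bool.ite_eq_false_distrib] at hAB
    have hAB' : ∑ h ∈ Finset.univ.filter (fun h => A h = true ∧ B h = true), μ h = 0 := by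
      simpa using hAB
    have z1 := filter_zero μ hnn _ hAB'
    have z2 := filter_nn_zero μ hnn _ _ htot hA hB hAB'
    cases cA : A h <;> cases cB : B h
    · exact absurd (z2 h (by simp [cA]) (by simp [cB])) hμ
    · simp
    · simp
    · exact absurd (z1 h ⟨cA, cB⟩) hμ
  · have hAB' : ∑ h ∈ Finset.univ.filter (fun h => A h = true ∧ B h = true), μ h = 1/2 := by
      simpa using hAB
    have hBA : ∑ h ∈ Finset.univ.filter (fun h => B h = true ∧ A h = true), μ h = 1/2 := by
      rw [show (Finset.univ.filter (fun h : HH8 => B h = true ∧ A h = true))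
          = Finset.univ.filter (fun h : HH8 => A h = true ∧ B h = true) by
        ext x; simp [and_comm]]
      exact hAB'
    have z1 := filter_sub_zero μ hnn _ _ _ hA hAB'
    have z2 := filter_sub_zero μ hnn _ _ _ hB hBA
    cases cA : A h <;> cases cB : B h
    · simp
    · exact absurd (z2 h cB (by simp [cA])) hμ
    · exact absurd (z1 h cA (by simp [cB])) hμ
    · simp

lemma le_maxS1 (p : Fin 2 → Fin 2 → ℝ) (s : Fin 2 → Fin 2 → Bool)
    (hs : ¬ Even (plusCount s)) : Sval p s ≤ maxS1 p :=
  Finset.le_sup' (Sval p) (Finset.mem_filter.mpr ⟨Finset.mem_univ _, hs⟩)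

lemma mul_bnd {x y : ℝ} (hx : -1 ≤ x) (hx' : x ≤ 1) (hy : -1 ≤ y) (hy' : y ≤ 1) :
    -1 ≤ x*y ∧ x*y ≤ 1 := ⟨by nlinarith, by nlinarith⟩

lemma parityS : ∀ s : Fin 2 → Fin 2 → Bool,
    (∏ k : Fin 2, ∏ i : Fin 2, (if s k i then (1:ℤ) else -1)) = 1 → Even (plusCount s) := by
  decide

lemma sq_one {x : ℝ} (hx : x^2 = 1) : x = 1 ∨ x = -1 := by
  rcases mul_eq_zero.mp (show (x-1)*(x+1) = 0 by linear_combination hx) with h|h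
  · exact Or.inl (by linarith)
  · exact Or.inr (by linarith)


set_option maxHeartbeats 1600000 in
lemma force_mp
    (ε : Fin 2 → Fin 2 → ℝ)
    (hε : ∀ k i, ε k i ∈ Set.Icc (0 : ℝ) (1 / 2))
    (hforall : ∀ p : Fin 2 → Fin 2 → ℝ, (∀ i j, p i j ∈ Set.Icc (0 : ℝ) (1 / 2)) →
        ELFP p ε → maxS1 p ≤ 1 / 2) : memS0 ε 1 := by
  by_contra hmem
  show False
  classical
  obtain ⟨a1, ha1⟩ : ∃ x : ℝ, x = 4 * ε 0 0 - 1 := ⟨_, rfl⟩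
  obtain ⟨a2, ha2⟩ : ∃ x : ℝ, x = 4 * ε 0 1 - 1 := ⟨_, rfl⟩
  obtain ⟨b1, hb1⟩ : ∃ x : ℝ, x = 4 * ε 1 0 - 1 := ⟨_, rfl⟩
  obtain ⟨b2, hb2⟩ : ∃ x : ℝ, x = 4 * ε 1 1 - 1 := ⟨_, rfl⟩
  have hbnd : ∀ k i : Fin 2, 0 ≤ ε k i ∧ ε k i ≤ 1/2 := by
    intro k i; have := hε k i; rw [Set.mem_Icc] at this; exact this
  have n1 : -1 ≤ a1 ∧ a1 ≤ 1 := by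
    have := hbnd 0 0; constructor <;> [skip; skip] <;> rw [ha1] <;> linarith [this.1, this.2]
  have n2 : -1 ≤ a2 ∧ a2 ≤ 1 := by
    have := hbnd 0 1; constructor <;> [skip; skip] <;> rw [ha2] <;> linarith [this.1, this.2]
  have n3 : -1 ≤ b1 ∧ b1 ≤ 1 := by
    have := hbnd 1 0; constructor <;> [skip; skip] <;> rw [hb1] <;> linarith [this.1, this.2]
  have n4 : -1 ≤ b2 ∧ b2 ≤ 1 := by
    have := hbnd 1 1; constructor <;> [skip; skip] <;> rw [hb2] <;> linarith [this.1, this.2]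
  have hepsm : ε = epsM a1 a2 b1 b2 := by
    funext k i
    rcases fin2cases k with rfl | rfl <;> rcases fin2cases i with rfl | rfl <;>
      simp [epsM, ha1, ha2, hb1, hb2] <;> ring
  have m12 := mul_bnd n1.1 n1.2 n2.1 n2.2
  have m34 := mul_bnd n3.1 n3.2 n4.1 n4.2
  have m12b2 := mul_bnd m12.1 m12.2 n4.1 n4.2
  have m12b1 := mul_bnd m12.1 m12.2 n3.1 n3.2
  have m34a2 := mul_bnd n2.1 n2.2 m34.1 m34.2
  have m34a1 := mul_bnd n1.1 n1.2 m34.1 m34.2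
  have od1 : ¬ Even (plusCount ![![true,true],![true,false]]) := by decide
  have od2 : ¬ Even (plusCount ![![true,true],![false,true]]) := by decide
  have od3 : ¬ Even (plusCount ![![true,false],![true,true]]) := by decide
  -- equality 1 via construction A
  have e1 : b1 = a1*a2*b2 := by
    have hpb : ∀ i j, pA a1 a2 b1 b2 i j ∈ Set.Icc (0:ℝ) (1/2) := by
      intro i j
      rcases fin2cases i with rfl | rfl <;> rcases fin2cases j with rfl | rfl <;>
        rw [Set.mem_Icc] <;> constructor <;>
        simp [pA] <;> nlinarith [m12b2.1, m12b2.2, n3.1, n3.2]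
    have hbell := hforall _ hpb
      (by rw [hepsm]; exact elfpA a1 a2 b1 b2 n1.1 n1.2 n2.1 n2.2 n3.1 n3.2 n4.1 n4.2)
    have sv1 : Sval (pA a1 a2 b1 b2) ![![true,true],![true,false]]
        = 1/2 + (b1 - a1*a2*b2)/4 := by
      simp [Sval, Fin.sum_univ_two, pA]; ring
    have sv2 : Sval (pA a1 a2 b1 b2) ![![true,true],![false,true]]
        = 1/2 - (b1 - a1*a2*b2)/4 := by
      simp [Sval, Fin.sum_univ_two, pA]; ring
    have g1 := le_maxS1 (pA a1 a2 b1 b2) _ od1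
    have g2 := le_maxS1 (pA a1 a2 b1 b2) _ od2
    rw [sv1] at g1; rw [sv2] at g2
    linarith
  -- equality 2 via construction B
  have e2 : b2 = a1*a2*b1 := by
    have hpb : ∀ i j, pB a1 a2 b1 b2 i j ∈ Set.Icc (0:ℝ) (1/2) := by
      intro i j
      rcases fin2cases i with rfl | rfl <;> rcases fin2cases j with rfl | rfl <;>
        rw [Set.mem_Icc] <;> constructor <;>
        simp [pB] <;> nlinarith [m12b1.1, m12b1.2, n4.1, n4.2]
    have hbell := hforall _ hpb
      (by rw [hepsm]; exact elfpB a1 a2 b1 b2 n1.1 n1.2 n2.1 n2.2 n3.1 n3.2 n4.1 n4.2)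
    have sv1 : Sval (pB a1 a2 b1 b2) ![![true,true],![false,true]]
        = 1/2 + (b2 - a1*a2*b1)/4 := by
      simp [Sval, Fin.sum_univ_two, pB]; ring
    have sv2 : Sval (pB a1 a2 b1 b2) ![![true,true],![true,false]]
        = 1/2 - (b2 - a1*a2*b1)/4 := by
      simp [Sval, Fin.sum_univ_two, pB]; ring
    have g1 := le_maxS1 (pB a1 a2 b1 b2) _ od2
    have g2 := le_maxS1 (pB a1 a2 b1 b2) _ od1
    rw [sv1] at g1; rw [sv2] at g2
    linarith
  -- equality 3 via construction C
  have e3 : a1 = a2*b1*b2 := by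
    have hpb : ∀ i j, pC a1 a2 b1 b2 i j ∈ Set.Icc (0:ℝ) (1/2) := by
      intro i j
      rcases fin2cases i with rfl | rfl <;> rcases fin2cases j with rfl | rfl <;>
        rw [Set.mem_Icc] <;> constructor <;>
        simp [pC] <;> nlinarith [m34a2.1, m34a2.2, n1.1, n1.2]
    have hbell := hforall _ hpb
      (by rw [hepsm]; exact elfpC a1 a2 b1 b2 n1.1 n1.2 n2.1 n2.2 n3.1 n3.2 n4.1 n4.2)
    have sv1 : Sval (pC a1 a2 b1 b2) ![![true,true],![true,false]]
        = 1/2 + (a1 - a2*b1*b2)/4 := by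
      simp [Sval, Fin.sum_univ_two, pC]; ring
    have sv2 : Sval (pC a1 a2 b1 b2) ![![true,false],![true,true]]
        = 1/2 - (a1 - a2*b1*b2)/4 := by
      simp [Sval, Fin.sum_univ_two, pC]; ring
    have g1 := le_maxS1 (pC a1 a2 b1 b2) _ od1
    have g2 := le_maxS1 (pC a1 a2 b1 b2) _ od3
    rw [sv1] at g1; rw [sv2] at g2
    linarith
  -- equality 4 via construction D
  have e4 : a2 = a1*b1*b2 := by
    have hpb : ∀ i j, pD a1 a2 b1 b2 i j ∈ Set.Icc (0:ℝ) (1/2) := by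
      intro i j
      rcases fin2cases i with rfl | rfl <;> rcases fin2cases j with rfl | rfl <;>
        rw [Set.mem_Icc] <;> constructor <;>
        simp [pD] <;> nlinarith [m34a1.1, m34a1.2, n2.1, n2.2]
    have hbell := hforall _ hpb
      (by rw [hepsm]; exact elfpD a1 a2 b1 b2 n1.1 n1.2 n2.1 n2.2 n3.1 n3.2 n4.1 n4.2)
    have sv1 : Sval (pD a1 a2 b1 b2) ![![true,false],![true,true]]
        = 1/2 + (a2 - a1*b1*b2)/4 := by
      simp [Sval, Fin.sum_univ_two, pD]; ring
    have sv2 : Sval (pD a1 a2 b1 b2) ![![true,true],![true,false]]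
        = 1/2 - (a2 - a1*b1*b2)/4 := by
      simp [Sval, Fin.sum_univ_two, pD]; ring
    have g1 := le_maxS1 (pD a1 a2 b1 b2) _ od3
    have g2 := le_maxS1 (pD a1 a2 b1 b2) _ od1
    rw [sv1] at g1; rw [sv2] at g2
    linarith
  by_cases hz : a1 = 0
  · -- all zero: construction E gives a violation
    have hz2 : a2 = 0 := by rw [e4, hz]; ring
    have hz3 : b1 = 0 := by rw [e1, hz]; ring
    have hz4 : b2 = 0 := by rw [e2, hz]; ring
    have hpb : ∀ i j, pE i j ∈ Set.Icc (0:ℝ) (1/2) := by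
      intro i j
      rcases fin2cases i with rfl | rfl <;> rcases fin2cases j with rfl | rfl <;>
        rw [Set.mem_Icc] <;> constructor <;> norm_num [pE]
    have hbell := hforall pE hpb
      (by rw [hepsm, hz, hz2, hz3, hz4]; exact elfpE)
    have sv1 : Sval pE ![![true,true],![true,false]] = 1 := by
      simp [Sval, Fin.sum_univ_two, pE]; norm_num
    have g1 := le_maxS1 pE _ od1
    rw [sv1] at g1
    linarith
  · -- extreme even case: contradicts ¬memS0
    have hbb : (b1*b2)^2 = 1 := by
      have k1 : a1 * (1 - (b1*b2)^2) = 0 := by linear_combination e3 + (b1*b2) * e4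
      rcases mul_eq_zero.mp k1 with h | h
      · exact absurd h hz
      · linarith
    have hb1s : b1^2 = 1 := by nlinarith [n3.1, n3.2, n4.1, n4.2, sq_nonneg b1, sq_nonneg b2]
    have hb2s : b2^2 = 1 := by nlinarith [n3.1, n3.2, n4.1, n4.2, sq_nonneg b1, sq_nonneg b2]
    have hb1z : b1 ≠ 0 := by intro h; rw [h] at hb1s; norm_num at hb1s
    have haa : (a1*a2)^2 = 1 := by
      have k2 : b1 * (1 - (a1*a2)^2) = 0 := by linear_combination e1 + (a1*a2) * e2
      rcases mul_eq_zero.mp k2 with h | h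
      · exact absurd h hb1z
      · linarith
    have ha1s : a1^2 = 1 := by nlinarith [n1.1, n1.2, n2.1, n2.2, sq_nonneg a1, sq_nonneg a2]
    have ha2s : a2^2 = 1 := by nlinarith [n1.1, n1.2, n2.1, n2.2, sq_nonneg a1, sq_nonneg a2]
    have hq : a1*a2 = b1*b2 := by linear_combination a2 * e3 + (b1*b2) * ha2s
    have hprod : a1*a2*b1*b2 = 1 := by linear_combination (b1*b2) * hq + hbb
    -- ε components are extreme
    have hsq : ∀ k i : Fin 2, 4 * ε k i - 1 = 1 ∨ 4 * ε k i - 1 = -1 := by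
      intro k i
      rcases fin2cases k with rfl | rfl <;> rcases fin2cases i with rfl | rfl
      · rw [← ha1]; exact sq_one ha1s
      · rw [← ha2]; exact sq_one ha2s
      · rw [← hb1]; exact sq_one hb1s
      · rw [← hb2]; exact sq_one hb2s
    have ht : ∀ k i : Fin 2,
        ((if ε k i = 1/2 then true else false) = true ∧ 4 * ε k i - 1 = 1)
        ∨ ((if ε k i = 1/2 then true else false) = false ∧ 4 * ε k i - 1 = -1) := by
      intro k i
      rcases hsq k i with h | h
      · exact Or.inl ⟨if_pos (by linarith), h⟩
      · exact Or.inr ⟨if_neg (fun hc => by rw [hc] at h; norm_num at h), h⟩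
    refine hmem ⟨fun k i => if ε k i = 1/2 then true else false, ?_, ?_⟩
    · -- even parity
      apply parityS
      rw [Fin.prod_univ_two, Fin.prod_univ_two, Fin.prod_univ_two]
      rcases ht 0 0 with ⟨hc00, hv00⟩ | ⟨hc00, hv00⟩ <;>
        rcases ht 0 1 with ⟨hc01, hv01⟩ | ⟨hc01, hv01⟩ <;>
        rcases ht 1 0 with ⟨hc10, hv10⟩ | ⟨hc10, hv10⟩ <;>
        rcases ht 1 1 with ⟨hc11, hv11⟩ | ⟨hc11, hv11⟩ <;>
        rw [hc00, hc01, hc10, hc11] <;>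
        first
          | decide
          | (exfalso
             rw [ha1, ha2, hb1, hb2, hv00, hv01, hv10, hv11] at hprod
             norm_num at hprod)
    · -- Sval = 1
      have hterm : ∀ k i : Fin 2,
          (if (if ε k i = 1/2 then true else false) then (1:ℝ) else -1) * (ε k i - 1/4)
            = 1/4 := by
        intro k i
        rcases ht k i with ⟨hc, hv⟩ | ⟨hc, hv⟩ <;> rw [hc] <;> norm_num <;> linarith
      simp only [Sval, Fin.sum_univ_two, hterm 0 0, hterm 0 1, hterm 1 0, hterm 1 1]
      norm_num

set_option maxHeartbeats 1600000 in
lemma force_mpr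
    (ε : Fin 2 → Fin 2 → ℝ)
    (hε : ∀ k i, ε k i ∈ Set.Icc (0 : ℝ) (1 / 2))
    (hmem : memS0 ε 1) :
    ∀ p : Fin 2 → Fin 2 → ℝ, (∀ i j, p i j ∈ Set.Icc (0 : ℝ) (1 / 2)) →
        ELFP p ε → maxS1 p ≤ 1 / 2 := by
  obtain ⟨s, hsev, hsval⟩ := hmem
  intro p hp ⟨μ, hnn, htot, hmarg, hpv, he0, he1⟩
  -- ε is extreme according to s
  have hterm_le : ∀ k i : Fin 2, (if s k i then (1:ℝ) else -1) * (ε k i - 1/4) ≤ 1/4 := by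
    intro k i; have := hε k i; rw [Set.mem_Icc] at this
    by_cases hb : s k i <;> simp [hb] <;> linarith [this.1, this.2]
  have hsum : (if s 0 0 then (1:ℝ) else -1) * (ε 0 0 - 1/4)
      + (if s 0 1 then (1:ℝ) else -1) * (ε 0 1 - 1/4)
      + (if s 1 0 then (1:ℝ) else -1) * (ε 1 0 - 1/4)
      + (if s 1 1 then (1:ℝ) else -1) * (ε 1 1 - 1/4) = 1 := by
    simp only [Sval, Fin.sum_univ_two] at hsval; linarith
  have hval : ∀ k i : Fin 2, ε k i = if s k i then 1/2 else 0 := by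
    have q1 := hterm_le 0 0; have q2 := hterm_le 0 1
    have q3 := hterm_le 1 0; have q4 := hterm_le 1 1
    intro k i
    have heq : (if s k i then (1:ℝ) else -1) * (ε k i - 1/4) = 1/4 := by
      rcases fin2cases k with rfl | rfl <;> rcases fin2cases i with rfl | rfl <;> linarith
    by_cases hb : s k i
    · rw [if_pos hb]; rw [if_pos hb] at heq; linarith
    · rw [if_neg hb]; rw [if_neg hb] at heq; linarith
  have rel0 : ∀ i : Fin 2, ∀ h : HH8, μ h ≠ 0 → (h 0 i 0 == h 0 i 1) = s 0 i := by
    intro i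
    exact pair_rel μ hnn htot (fun h => h 0 i 0) (fun h => h 0 i 1)
      (hmarg 0 i 0) (hmarg 0 i 1) (s 0 i)
      (by rw [he0 i, hval 0 i])
  have rel1 : ∀ j : Fin 2, ∀ h : HH8, μ h ≠ 0 → (h 1 0 j == h 1 1 j) = s 1 j := by
    intro j
    exact pair_rel μ hnn htot (fun h => h 1 0 j) (fun h => h 1 1 j)
      (hmarg 1 0 j) (hmarg 1 1 j) (s 1 j)
      (by rw [he1 j, hval 1 j])
  -- correlation form of p
  have hcorr : ∀ i j : Fin 2, p i j - 1/4
      = (∑ h : HH8, μ h * ((if h 0 i j then (1:ℝ) else -1)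
          * (if h 1 i j then (1:ℝ) else -1)))/4 := by
    intro i j
    have hm : ∀ k : Fin 2, ∑ h : HH8, μ h * (if h k i j then (1:ℝ) else -1) = 0 := by
      intro k
      have hm' := hmarg k i j
      rw [Finset.sum_filter] at hm'
      have step : ∑ h : HH8, μ h * (if h k i j then (1:ℝ) else -1)
          = ∑ h : HH8, (2 * (if h k i j = true then μ h else 0) - μ h) := by
        refine Finset.sum_congr rfl fun h _ => ?_
        by_cases hc : h k i j = true <;> simp [hc] <;> ring
      rw [step, Finset.sum_sub_distrib, ← Finset.mul_sum, hm', htot]; ring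
    have hpv' : ∑ h : HH8, (if h 0 i j = true ∧ h 1 i j = true then μ h else 0) = p i j := by
      rw [← Finset.sum_filter]; exact hpv i j
    have expand : ∀ h : HH8, (if h 0 i j = true ∧ h 1 i j = true then μ h else 0) - μ h * (1/4)
        = μ h * ((if h 0 i j then (1:ℝ) else -1) * (if h 1 i j then (1:ℝ) else -1))/4
          + (μ h * (if h 0 i j then (1:ℝ) else -1)/4
            + μ h * (if h 1 i j then (1:ℝ) else -1)/4) := by
      intro h
      by_cases c0 : h 0 i j = true <;> by_cases c1 : h 1 i j = true <;>
        simp [c0, c1] <;> ring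
    have big : p i j - 1/4
        = ∑ h : HH8, ((if h 0 i j = true ∧ h 1 i j = true then μ h else 0) - μ h * (1/4)) := by
      rw [Finset.sum_sub_distrib, hpv', ← Finset.sum_mul, htot]; ring
    rw [big, Finset.sum_congr rfl fun h _ => expand h, Finset.sum_add_distrib,
      Finset.sum_add_distrib, ← Finset.sum_div, ← Finset.sum_div, ← Finset.sum_div,
      hm 0, hm 1]
    ring
  -- the CHSH bound
  unfold maxS1
  apply Finset.sup'_le
  intro t ht
  rw [Finset.mem_filter] at ht
  have htodd := ht.2
  have hsv : Sval p t = ∑ h : HH8, μ h * ((∑ i : Fin 2, ∑ j : Fin 2,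
      (if t i j then (1:ℝ) else -1) * ((if h 0 i j then (1:ℝ) else -1)
        * (if h 1 i j then (1:ℝ) else -1))))/4 := by
    simp only [Sval, Fin.sum_univ_two]
    rw [hcorr 0 0, hcorr 0 1, hcorr 1 0, hcorr 1 1]
    simp only [Finset.sum_div, Finset.mul_sum]
    rw [← Finset.sum_add_distrib, ← Finset.sum_add_distrib, ← Finset.sum_add_distrib]
    refine Finset.sum_congr rfl fun h _ => by ring
  rw [hsv]
  have bound : ∀ h : HH8, μ h * ((∑ i : Fin 2, ∑ j : Fin 2,
      (if t i j then (1:ℝ) else -1) * ((if h 0 i j then (1:ℝ) else -1)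
        * (if h 1 i j then (1:ℝ) else -1))))/4 ≤ μ h * 2/4 := by
    intro h
    rcases eq_or_ne (μ h) 0 with h0 | h0
    · simp [h0]
    · have hZ := keyR s t hsev htodd h (fun i => rel0 i h h0) (fun j => rel1 j h h0)
      have hpos := hnn h
      have : μ h * ((∑ i : Fin 2, ∑ j : Fin 2,
          (if t i j then (1:ℝ) else -1) * ((if h 0 i j then (1:ℝ) else -1)
            * (if h 1 i j then (1:ℝ) else -1)))) ≤ μ h * 2 :=
        mul_le_mul_of_nonneg_left hZ hpos
      linarith
  calc ∑ h : HH8, μ h * ((∑ i : Fin 2, ∑ j : Fin 2,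
      (if t i j then (1:ℝ) else -1) * ((if h 0 i j then (1:ℝ) else -1)
        * (if h 1 i j then (1:ℝ) else -1))))/4
      ≤ ∑ h : HH8, μ h * 2/4 := Finset.sum_le_sum fun h _ => bound h
    _ = 1/2 := by
        rw [← Finset.sum_div, ← Finset.sum_mul, htot]; norm_num

/-- the Force set for the classical ("class") constraint:
every `p ∈ [0,1/2]⁴` compatible with `ε` satisfies the Bell/CHSH inequalities
(`max S₁p ≤ 1/2`) iff `1 ∈ S₀ε`. -/
theorem force_class
    (ε : Fin 2 → Fin 2 → ℝ)
    (hε : ∀ k i, ε k i ∈ Set.Icc (0 : ℝ) (1 / 2)) :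
    (∀ p : Fin 2 → Fin 2 → ℝ, (∀ i j, p i j ∈ Set.Icc (0 : ℝ) (1 / 2)) →
        ELFP p ε → maxS1 p ≤ 1 / 2) ↔
      memS0 ε 1 := by
  exact ⟨force_mp ε hε, force_mpr ε hε⟩
end

section
/- Let ε = (ε¹₁,ε¹₂,ε²₁,ε²₂) ∈ [0,1/2]⁴. Then the following are equivalent: (a) for every p ∈ [0,1/2]⁴, one has max S₁p ≤ 1/2 (the Bell/CHSH inequalities) if and only if (p, ε) ∈ ELFP; (b) 1 ∈ S₀ε. (This characterizes the set Equi for the classical ('class') constraint; in particular, any ε with 1 ∈ S₀ε both fits and forces the Bell/CHSH constraint.) -/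
open Finset

set_option maxHeartbeats 1600000

abbrev Hsp := Fin 2 → Fin 2 → Fin 2 → Bool

/-- indicator of "agreement status equals σ" -/
noncomputable def gg (σ a b : Bool) : ℝ := if (a == b) = σ then 1 else 0

lemma gg_nonneg (σ a b : Bool) : 0 ≤ gg σ a b := by unfold gg; split <;> norm_num

lemma gg_le_one (σ a b : Bool) : gg σ a b ≤ 1 := by unfold gg; split <;> norm_num

lemma gg_cases (σ a b : Bool) : gg σ a b = 0 ∨ (gg σ a b = 1 ∧ (a == b) = σ) := by
  unfold gg; split
  · exact Or.inr ⟨rfl, by assumption⟩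
  · exact Or.inl rfl

section FilterAlg

variable {X : Type*} [Fintype X] (μ : X → ℝ)

lemma agree_sum (A B : X → Bool) (β : ℝ)
    (htot : ∑ h : X, μ h = 1)
    (hA : ∑ h ∈ Finset.univ.filter (fun h => A h = true), μ h = 1 / 2)
    (hB : ∑ h ∈ Finset.univ.filter (fun h => B h = true), μ h = 1 / 2)
    (hAB : ∑ h ∈ Finset.univ.filter (fun h => A h = true ∧ B h = true), μ h = β) :
    ∑ h : X, (if A h = B h then μ h else 0) = 2 * β := by
  rw [Finset.sum_filter] at hA hB hAB
  have key : ∀ h : X, (if A h = B h then μ h else 0)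
      = 2 * (if A h = true ∧ B h = true then μ h else 0)
        + μ h - (if A h = true then μ h else 0) - (if B h = true then μ h else 0) := by
    intro h; cases hA' : A h <;> cases hB' : B h <;> simp [hA', hB'] <;> ring
  rw [Finset.sum_congr rfl (fun h _ => key h)]
  rw [Finset.sum_sub_distrib, Finset.sum_sub_distrib, Finset.sum_add_distrib,
    ← Finset.mul_sum, hA, hB, hAB, htot]
  ring

lemma edge_val (A B : X → Bool) (σ : Bool) (β : ℝ)
    (htot : ∑ h : X, μ h = 1)
    (hA : ∑ h ∈ Finset.univ.filter (fun h => A h = true), μ h = 1 / 2)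
    (hB : ∑ h ∈ Finset.univ.filter (fun h => B h = true), μ h = 1 / 2)
    (hAB : ∑ h ∈ Finset.univ.filter (fun h => A h = true ∧ B h = true), μ h = β) :
    ∑ h : X, μ h * gg σ (A h) (B h) = if σ then 2 * β else 1 - 2 * β := by
  have hag := agree_sum μ A B β htot hA hB hAB
  cases σ
  · have key : ∀ h : X, μ h * gg false (A h) (B h)
        = μ h - (if A h = B h then μ h else 0) := by
      intro h; by_cases hc : A h = B h <;> simp [gg, hc]
    rw [Finset.sum_congr rfl (fun h _ => key h), Finset.sum_sub_distrib, htot, hag]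
    norm_num
  · have key : ∀ h : X, μ h * gg true (A h) (B h)
        = (if A h = B h then μ h else 0) := by
      intro h; by_cases hc : A h = B h <;> simp [gg, hc]
    rw [Finset.sum_congr rfl (fun h _ => key h), hag]
    norm_num

end FilterAlg

lemma cycle_parity (x00 x01 x10 x11 y00 y01 y10 y11 : Bool) :
    Even ((if x00 = x01 then (0:ℕ) else 1) + (if x10 = x11 then (0:ℕ) else 1)
      + (if y00 = y10 then (0:ℕ) else 1) + (if y01 = y11 then (0:ℕ) else 1)
      + (if x00 = y00 then (0:ℕ) else 1) + (if x01 = y01 then (0:ℕ) else 1)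
      + (if x10 = y10 then (0:ℕ) else 1) + (if x11 = y11 then (0:ℕ) else 1)) := by
  revert x00 x01 x10 x11 y00 y01 y10 y11; decide

lemma plusCount_eq (s : Fin 2 → Fin 2 → Bool) :
    plusCount s = (if s 0 0 = true then 1 else 0) + (if s 0 1 = true then 1 else 0)
      + (if s 1 0 = true then 1 else 0) + (if s 1 1 = true then 1 else 0) := by
  rw [plusCount, Finset.card_filter, Fintype.sum_prod_type, Fin.sum_univ_two,
    Fin.sum_univ_two, Fin.sum_univ_two]
  norm_num [add_assoc]

lemma dis_of_gg {a b σ : Bool} (hc : (a == b) = σ) :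
    (if a = b then (0:ℕ) else 1) = (if σ = true then 0 else 1) := by
  cases σ <;> simp_all

lemma even_flip : ∀ b1 b2 b3 b4 b5 b6 b7 b8 : Bool,
    Even ((if b1 = true then (0:ℕ) else 1) + (if b2 = true then (0:ℕ) else 1)
      + (if b3 = true then (0:ℕ) else 1) + (if b4 = true then (0:ℕ) else 1)
      + (if b5 = true then (0:ℕ) else 1) + (if b6 = true then (0:ℕ) else 1)
      + (if b7 = true then (0:ℕ) else 1) + (if b8 = true then (0:ℕ) else 1)) →
    Even ((if b1 = true then (1:ℕ) else 0) + (if b2 = true then (1:ℕ) else 0)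
      + (if b3 = true then (1:ℕ) else 0) + (if b4 = true then (1:ℕ) else 0)
      + (if b5 = true then (1:ℕ) else 0) + (if b6 = true then (1:ℕ) else 0)
      + (if b7 = true then (1:ℕ) else 0) + (if b8 = true then (1:ℕ) else 0)) := by
  decide

lemma sterm (σ : Bool) (β : ℝ) :
    (if σ = true then (1:ℝ) else -1) * (β - 1 / 4)
      = ((if σ = true then 2 * β else 1 - 2 * β) - 1 / 2) / 2 := by
  cases σ <;> norm_num <;> ring

lemma L1 (p ε : Fin 2 → Fin 2 → ℝ) (hE : ELFP p ε) (sp se : Fin 2 → Fin 2 → Bool)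
    (hpar : ¬ Even (plusCount sp + plusCount se)) :
    Sval p sp + Sval ε se ≤ 3 / 2 := by
  obtain ⟨μ, hnn, htot, hm, hpv, he0, he1⟩ := hE
  have E1 := edge_val μ (fun h => h 0 0 0) (fun h => h 0 0 1) (se 0 0) (ε 0 0) htot
    (hm 0 0 0) (hm 0 0 1) (he0 0)
  have E2 := edge_val μ (fun h => h 0 1 0) (fun h => h 0 1 1) (se 0 1) (ε 0 1) htot
    (hm 0 1 0) (hm 0 1 1) (he0 1)
  have E3 := edge_val μ (fun h => h 1 0 0) (fun h => h 1 1 0) (se 1 0) (ε 1 0) htot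
    (hm 1 0 0) (hm 1 1 0) (he1 0)
  have E4 := edge_val μ (fun h => h 1 0 1) (fun h => h 1 1 1) (se 1 1) (ε 1 1) htot
    (hm 1 0 1) (hm 1 1 1) (he1 1)
  have E5 := edge_val μ (fun h => h 0 0 0) (fun h => h 1 0 0) (sp 0 0) (p 0 0) htot
    (hm 0 0 0) (hm 1 0 0) (hpv 0 0)
  have E6 := edge_val μ (fun h => h 0 0 1) (fun h => h 1 0 1) (sp 0 1) (p 0 1) htot
    (hm 0 0 1) (hm 1 0 1) (hpv 0 1)
  have E7 := edge_val μ (fun h => h 0 1 0) (fun h => h 1 1 0) (sp 1 0) (p 1 0) htot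
    (hm 0 1 0) (hm 1 1 0) (hpv 1 0)
  have E8 := edge_val μ (fun h => h 0 1 1) (fun h => h 1 1 1) (sp 1 1) (p 1 1) htot
    (hm 0 1 1) (hm 1 1 1) (hpv 1 1)
  have hNle : ∀ h : Hsp,
      gg (se 0 0) (h 0 0 0) (h 0 0 1) + gg (se 0 1) (h 0 1 0) (h 0 1 1)
      + gg (se 1 0) (h 1 0 0) (h 1 1 0) + gg (se 1 1) (h 1 0 1) (h 1 1 1)
      + gg (sp 0 0) (h 0 0 0) (h 1 0 0) + gg (sp 0 1) (h 0 0 1) (h 1 0 1)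
      + gg (sp 1 0) (h 0 1 0) (h 1 1 0) + gg (sp 1 1) (h 0 1 1) (h 1 1 1) ≤ 7 := by
    intro h
    have le1 := gg_le_one (se 0 0) (h 0 0 0) (h 0 0 1)
    have le2 := gg_le_one (se 0 1) (h 0 1 0) (h 0 1 1)
    have le3 := gg_le_one (se 1 0) (h 1 0 0) (h 1 1 0)
    have le4 := gg_le_one (se 1 1) (h 1 0 1) (h 1 1 1)
    have le5 := gg_le_one (sp 0 0) (h 0 0 0) (h 1 0 0)
    have le6 := gg_le_one (sp 0 1) (h 0 0 1) (h 1 0 1)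
    have le7 := gg_le_one (sp 1 0) (h 0 1 0) (h 1 1 0)
    have le8 := gg_le_one (sp 1 1) (h 0 1 1) (h 1 1 1)
    rcases gg_cases (se 0 0) (h 0 0 0) (h 0 0 1) with h1 | ⟨h1, c1⟩
    · linarith
    rcases gg_cases (se 0 1) (h 0 1 0) (h 0 1 1) with h2 | ⟨h2, c2⟩
    · linarith
    rcases gg_cases (se 1 0) (h 1 0 0) (h 1 1 0) with h3 | ⟨h3, c3⟩
    · linarith
    rcases gg_cases (se 1 1) (h 1 0 1) (h 1 1 1) with h4 | ⟨h4, c4⟩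
    · linarith
    rcases gg_cases (sp 0 0) (h 0 0 0) (h 1 0 0) with h5 | ⟨h5, c5⟩
    · linarith
    rcases gg_cases (sp 0 1) (h 0 0 1) (h 1 0 1) with h6 | ⟨h6, c6⟩
    · linarith
    rcases gg_cases (sp 1 0) (h 0 1 0) (h 1 1 0) with h7 | ⟨h7, c7⟩
    · linarith
    rcases gg_cases (sp 1 1) (h 0 1 1) (h 1 1 1) with h8 | ⟨h8, c8⟩
    · linarith
    exfalso
    have P := cycle_parity (h 0 0 0) (h 0 0 1) (h 0 1 0) (h 0 1 1)
      (h 1 0 0) (h 1 0 1) (h 1 1 0) (h 1 1 1)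
    rw [dis_of_gg c1, dis_of_gg c2, dis_of_gg c3, dis_of_gg c4,
      dis_of_gg c5, dis_of_gg c6, dis_of_gg c7, dis_of_gg c8] at P
    apply hpar
    rw [plusCount_eq, plusCount_eq]
    have hh := even_flip (se 0 0) (se 0 1) (se 1 0) (se 1 1)
      (sp 0 0) (sp 0 1) (sp 1 0) (sp 1 1) P
    convert hh using 1
    ring
  have hsplit : ∑ h : Hsp, μ h *
      (gg (se 0 0) (h 0 0 0) (h 0 0 1) + gg (se 0 1) (h 0 1 0) (h 0 1 1)
      + gg (se 1 0) (h 1 0 0) (h 1 1 0) + gg (se 1 1) (h 1 0 1) (h 1 1 1)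
      + gg (sp 0 0) (h 0 0 0) (h 1 0 0) + gg (sp 0 1) (h 0 0 1) (h 1 0 1)
      + gg (sp 1 0) (h 0 1 0) (h 1 1 0) + gg (sp 1 1) (h 0 1 1) (h 1 1 1))
      = (∑ h : Hsp, μ h * gg (se 0 0) (h 0 0 0) (h 0 0 1))
      + (∑ h : Hsp, μ h * gg (se 0 1) (h 0 1 0) (h 0 1 1))
      + (∑ h : Hsp, μ h * gg (se 1 0) (h 1 0 0) (h 1 1 0))
      + (∑ h : Hsp, μ h * gg (se 1 1) (h 1 0 1) (h 1 1 1))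
      + (∑ h : Hsp, μ h * gg (sp 0 0) (h 0 0 0) (h 1 0 0))
      + (∑ h : Hsp, μ h * gg (sp 0 1) (h 0 0 1) (h 1 0 1))
      + (∑ h : Hsp, μ h * gg (sp 1 0) (h 0 1 0) (h 1 1 0))
      + (∑ h : Hsp, μ h * gg (sp 1 1) (h 0 1 1) (h 1 1 1)) := by
    simp only [mul_add, Finset.sum_add_distrib]
  have hble : ∑ h : Hsp, μ h *
      (gg (se 0 0) (h 0 0 0) (h 0 0 1) + gg (se 0 1) (h 0 1 0) (h 0 1 1)
      + gg (se 1 0) (h 1 0 0) (h 1 1 0) + gg (se 1 1) (h 1 0 1) (h 1 1 1)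
      + gg (sp 0 0) (h 0 0 0) (h 1 0 0) + gg (sp 0 1) (h 0 0 1) (h 1 0 1)
      + gg (sp 1 0) (h 0 1 0) (h 1 1 0) + gg (sp 1 1) (h 0 1 1) (h 1 1 1)) ≤ 7 := by
    calc ∑ h : Hsp, μ h * _ ≤ ∑ h : Hsp, μ h * 7 :=
          Finset.sum_le_sum (fun h _ => mul_le_mul_of_nonneg_left (hNle h) (hnn h))
      _ = 7 := by rw [← Finset.sum_mul, htot]; ring
  rw [hsplit, E1, E2, E3, E4, E5, E6, E7, E8] at hble
  have hsv : Sval p sp + Sval ε se =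
      (((if se 0 0 = true then 2 * ε 0 0 else 1 - 2 * ε 0 0) - 1/2)/2
      + ((if se 0 1 = true then 2 * ε 0 1 else 1 - 2 * ε 0 1) - 1/2)/2
      + ((if se 1 0 = true then 2 * ε 1 0 else 1 - 2 * ε 1 0) - 1/2)/2
      + ((if se 1 1 = true then 2 * ε 1 1 else 1 - 2 * ε 1 1) - 1/2)/2)
      + (((if sp 0 0 = true then 2 * p 0 0 else 1 - 2 * p 0 0) - 1/2)/2
      + ((if sp 0 1 = true then 2 * p 0 1 else 1 - 2 * p 0 1) - 1/2)/2
      + ((if sp 1 0 = true then 2 * p 1 0 else 1 - 2 * p 1 0) - 1/2)/2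
      + ((if sp 1 1 = true then 2 * p 1 1 else 1 - 2 * p 1 1) - 1/2)/2) := by
    simp only [Sval, Fin.sum_univ_two, sterm]
    ring
  rw [hsv]
  linarith

lemma bridge {T : Type*} [Fintype T] (w : T → ℝ) (H : T → Hsp)
    (P : Hsp → Prop) [DecidablePred P] :
    ∑ h ∈ Finset.univ.filter P, (∑ t : T, if H t = h then w t else 0)
      = ∑ t : T, if P (H t) then w t else 0 := by
  rw [Finset.sum_comm]
  refine Finset.sum_congr rfl fun t _ => ?_
  rw [Finset.sum_ite_eq]
  simp

lemma bridge_tot {T : Type*} [Fintype T] (w : T → ℝ) (H : T → Hsp) :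
    ∑ h : Hsp, (∑ t : T, if H t = h then w t else 0) = ∑ t : T, w t := by
  rw [Finset.sum_comm]
  refine Finset.sum_congr rfl fun t _ => ?_
  rw [Finset.sum_ite_eq]
  simp

noncomputable def cnv (a b : ℝ) : ℝ := a + b - 2 * a * b

noncomputable def dd (ε : Fin 2 → Fin 2 → ℝ) (k i : Fin 2) : ℝ := 1 - 2 * ε k i

noncomputable def DD (ε : Fin 2 → Fin 2 → ℝ) : ℝ :=
  cnv (cnv (cnv (dd ε 1 0) (dd ε 0 0)) (dd ε 1 1)) (dd ε 0 1)

noncomputable def BB (b : Bool) (d : ℝ) : ℝ := if b then d else 1 - d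

abbrev T5 := Bool × Bool × Bool × Bool × Bool

noncomputable def w3 (ε : Fin 2 → Fin 2 → ℝ) (t : T5) : ℝ :=
  (1/2) * BB t.2.1 (dd ε 1 0) * BB t.2.2.1 (dd ε 0 0) * BB t.2.2.2.1 (dd ε 1 1)
    * BB t.2.2.2.2 (dd ε 0 1)

def H3 (t : T5) : Hsp :=
  ![ ![ ![t.1.xor t.2.1, (t.1.xor t.2.1).xor t.2.2.1],
        ![t.1, t.1.xor t.2.2.2.2] ],
     ![ ![t.1.xor t.2.1, (t.1.xor t.2.1).xor t.2.2.1],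
        ![t.1, ((t.1.xor t.2.1).xor t.2.2.1).xor t.2.2.2.1] ] ]

lemma BB_nonneg {d : ℝ} (b : Bool) (h0 : 0 ≤ d) (h1 : d ≤ 1) : 0 ≤ BB b d := by
  cases b <;> simp [BB] <;> linarith

lemma L3 (ε : Fin 2 → Fin 2 → ℝ) (hε : ∀ k i, ε k i ∈ Set.Icc (0:ℝ) (1/2)) :
    ELFP (fun i j => if i = 1 ∧ j = 1 then (1 - DD ε)/2 else (1/2 : ℝ)) ε := by
  have hdd : ∀ k i, 0 ≤ dd ε k i ∧ dd ε k i ≤ 1 := by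
    intro k i
    have h1 := (hε k i).1
    have h2 := (hε k i).2
    constructor <;> (unfold dd; linarith)
  refine ⟨fun h => ∑ t : T5, if H3 t = h then w3 ε t else 0, ?_, ?_, ?_, ?_, ?_, ?_⟩
  · intro h
    refine Finset.sum_nonneg fun t _ => ?_
    split
    · refine mul_nonneg (mul_nonneg (mul_nonneg (mul_nonneg (by norm_num)
        (BB_nonneg _ (hdd 1 0).1 (hdd 1 0).2)) (BB_nonneg _ (hdd 0 0).1 (hdd 0 0).2))
        (BB_nonneg _ (hdd 1 1).1 (hdd 1 1).2)) (BB_nonneg _ (hdd 0 1).1 (hdd 0 1).2)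
    · exact le_refl 0
  · beta_reduce
    rw [bridge_tot]
    simp only [Fintype.sum_prod_type, Fintype.sum_bool, w3, BB]
    norm_num
    ring
  · intro k i j
    fin_cases k <;> fin_cases i <;> fin_cases j <;>
      (beta_reduce
       rw [bridge]
       simp only [H3, Matrix.cons_val_zero, Matrix.cons_val_one, Matrix.head_cons]
       simp only [Fintype.sum_prod_type, Fintype.sum_bool, w3, BB]
       norm_num
       try ring)
  · intro i j
    fin_cases i <;> fin_cases j <;>
      (beta_reduce
       rw [bridge]
       simp only [H3, Matrix.cons_val_zero, Matrix.cons_val_one, Matrix.head_cons]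
       simp only [Fintype.sum_prod_type, Fintype.sum_bool, w3, BB, DD, cnv]
       norm_num [Fin.ext_iff]
       try ring
       try ring_nf)
  · intro i
    fin_cases i <;>
      (beta_reduce
       rw [bridge]
       simp only [H3, Matrix.cons_val_zero, Matrix.cons_val_one, Matrix.head_cons]
       simp only [Fintype.sum_prod_type, Fintype.sum_bool, w3, BB, dd]
       norm_num
       try ring
       try ring_nf)
  · intro j
    fin_cases j <;>
      (beta_reduce
       rw [bridge]
       simp only [H3, Matrix.cons_val_zero, Matrix.cons_val_one, Matrix.head_cons]
       simp only [Fintype.sum_prod_type, Fintype.sum_bool, w3, BB, dd]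
       norm_num
       try ring
       try ring_nf)

lemma Sval_expand (x : Fin 2 → Fin 2 → ℝ) (s : Fin 2 → Fin 2 → Bool) :
    Sval x s = (if s 0 0 then (1:ℝ) else -1) * (x 0 0 - 1/4)
      + (if s 0 1 then (1:ℝ) else -1) * (x 0 1 - 1/4)
      + (if s 1 0 then (1:ℝ) else -1) * (x 1 0 - 1/4)
      + (if s 1 1 then (1:ℝ) else -1) * (x 1 1 - 1/4) := by
  simp only [Sval, Fin.sum_univ_two]
  ring

abbrev T4 := Bool × Bool × Bool × Bool

section Fine
variable (q : Fin 2 → Fin 2 → ℝ)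

noncomputable def CC (A B : Bool) : ℝ :=
  (4*q 0 0 - 1) + (if B then 1 else -1) * (4*q 0 1 - 1)
  + (if A then 1 else -1) * (4*q 1 0 - 1)
  + (if A then 1 else -1) * (if B then 1 else -1) * (4*q 1 1 - 1)

noncomputable def slack : ℝ :=
  (4 - (|CC q true true| + |CC q true false| + |CC q false true| + |CC q false false|)) / 4

noncomputable def sg (b : Bool) : ℝ := if b then 1 else -1

noncomputable def nu (t : T4) : ℝ :=
  (1/16) * ((|CC q (t.1 == t.2.1) (t.2.2.1 == t.2.2.2)| + slack q)
    + ((4*q 0 0 - 1) * sg t.1 * sg t.2.2.1 + (4*q 0 1 - 1) * sg t.1 * sg t.2.2.2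
      + (4*q 1 0 - 1) * sg t.2.1 * sg t.2.2.1 + (4*q 1 1 - 1) * sg t.2.1 * sg t.2.2.2))

lemma nu_nonneg
    (hq : |CC q true true| + |CC q true false| + |CC q false true| + |CC q false false| ≤ 4)
    (t : T4) : 0 ≤ nu q t := by
  obtain ⟨a0, a1, b0, b1⟩ := t
  have e1 : CC q true true = (4*q 0 0 - 1) + (4*q 0 1 - 1) + (4*q 1 0 - 1) + (4*q 1 1 - 1) := by
    simp [CC]
  have e2 : CC q true false = (4*q 0 0 - 1) - (4*q 0 1 - 1) + (4*q 1 0 - 1) - (4*q 1 1 - 1) := by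
    simp [CC]; ring
  have e3 : CC q false true = (4*q 0 0 - 1) + (4*q 0 1 - 1) - (4*q 1 0 - 1) - (4*q 1 1 - 1) := by
    simp [CC]; ring
  have e4 : CC q false false = (4*q 0 0 - 1) - (4*q 0 1 - 1) - (4*q 1 0 - 1) + (4*q 1 1 - 1) := by
    simp [CC]; ring
  cases a0 <;> cases a1 <;> cases b0 <;> cases b1 <;>
    · simp only [nu, sg, slack]
      norm_num
      linarith [hq, abs_nonneg (CC q true true), abs_nonneg (CC q true false),
        abs_nonneg (CC q false true), abs_nonneg (CC q false false),
        le_abs_self (CC q true true), le_abs_self (CC q true false),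
        le_abs_self (CC q false true), le_abs_self (CC q false false),
        neg_abs_le (CC q true true), neg_abs_le (CC q true false),
        neg_abs_le (CC q false true), neg_abs_le (CC q false false),
        e1, e2, e3, e4]

lemma nu_total : ∑ t : T4, nu q t = 1 := by
  simp only [Fintype.sum_prod_type, Fintype.sum_bool, nu, sg, slack]
  norm_num; ring

lemma nu_a0 (x : Bool) : ∑ t : T4, (if t.1 = x then nu q t else 0) = 1/2 := by
  cases x <;> (simp only [Fintype.sum_prod_type, Fintype.sum_bool, nu, sg, slack]; norm_num; ring)

lemma nu_a1 (x : Bool) : ∑ t : T4, (if t.2.1 = x then nu q t else 0) = 1/2 := by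
  cases x <;> (simp only [Fintype.sum_prod_type, Fintype.sum_bool, nu, sg, slack]; norm_num; ring)

lemma nu_b0 (x : Bool) : ∑ t : T4, (if t.2.2.1 = x then nu q t else 0) = 1/2 := by
  cases x <;> (simp only [Fintype.sum_prod_type, Fintype.sum_bool, nu, sg, slack]; norm_num; ring)

lemma nu_b1 (x : Bool) : ∑ t : T4, (if t.2.2.2 = x then nu q t else 0) = 1/2 := by
  cases x <;> (simp only [Fintype.sum_prod_type, Fintype.sum_bool, nu, sg, slack]; norm_num; ring)

lemma nu_a0b0 (x y : Bool) : ∑ t : T4, (if t.1 = x ∧ t.2.2.1 = y then nu q t else 0)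
    = if x == y then q 0 0 else 1/2 - q 0 0 := by
  cases x <;> cases y <;>
    (simp only [Fintype.sum_prod_type, Fintype.sum_bool, nu, sg, slack]; norm_num; ring)

lemma nu_a0b1 (x y : Bool) : ∑ t : T4, (if t.1 = x ∧ t.2.2.2 = y then nu q t else 0)
    = if x == y then q 0 1 else 1/2 - q 0 1 := by
  cases x <;> cases y <;>
    (simp only [Fintype.sum_prod_type, Fintype.sum_bool, nu, sg, slack]; norm_num; ring)

lemma nu_a1b0 (x y : Bool) : ∑ t : T4, (if t.2.1 = x ∧ t.2.2.1 = y then nu q t else 0)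
    = if x == y then q 1 0 else 1/2 - q 1 0 := by
  cases x <;> cases y <;>
    (simp only [Fintype.sum_prod_type, Fintype.sum_bool, nu, sg, slack]; norm_num; ring)

lemma nu_a1b1 (x y : Bool) : ∑ t : T4, (if t.2.1 = x ∧ t.2.2.2 = y then nu q t else 0)
    = if x == y then q 1 1 else 1/2 - q 1 1 := by
  cases x <;> cases y <;>
    (simp only [Fintype.sum_prod_type, Fintype.sum_bool, nu, sg, slack]; norm_num; ring)

lemma nu_zero_a0 : ∑ t : T4, (if t.1 = true ∧ t.1 = false then nu q t else 0) = 0 := by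
  refine Finset.sum_eq_zero fun t _ => ?_
  rw [if_neg]; rintro ⟨h1, h2⟩; rw [h1] at h2; exact Bool.noConfusion h2

lemma nu_zero_a1 : ∑ t : T4, (if t.2.1 = true ∧ t.2.1 = false then nu q t else 0) = 0 := by
  refine Finset.sum_eq_zero fun t _ => ?_
  rw [if_neg]; rintro ⟨h1, h2⟩; rw [h1] at h2; exact Bool.noConfusion h2

lemma nu_zero_b0 : ∑ t : T4, (if t.2.2.1 = true ∧ t.2.2.1 = false then nu q t else 0) = 0 := by
  refine Finset.sum_eq_zero fun t _ => ?_
  rw [if_neg]; rintro ⟨h1, h2⟩; rw [h1] at h2; exact Bool.noConfusion h2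

lemma nu_zero_b1 : ∑ t : T4, (if t.2.2.2 = true ∧ t.2.2.2 = false then nu q t else 0) = 0 := by
  refine Finset.sum_eq_zero fun t _ => ?_
  rw [if_neg]; rintro ⟨h1, h2⟩; rw [h1] at h2; exact Bool.noConfusion h2

lemma CHSHq (hbox : ∀ i j, 0 ≤ q i j ∧ q i j ≤ 1/2)
    (c1 : (q 0 0 - 1/4) + (q 0 1 - 1/4) + (q 1 0 - 1/4) - (q 1 1 - 1/4) ≤ 1/2)
    (c2 : (q 0 0 - 1/4) + (q 0 1 - 1/4) - (q 1 0 - 1/4) + (q 1 1 - 1/4) ≤ 1/2)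
    (c3 : (q 0 0 - 1/4) - (q 0 1 - 1/4) + (q 1 0 - 1/4) + (q 1 1 - 1/4) ≤ 1/2)
    (c4 : -(q 0 0 - 1/4) + (q 0 1 - 1/4) + (q 1 0 - 1/4) + (q 1 1 - 1/4) ≤ 1/2)
    (c5 : -(q 0 0 - 1/4) - (q 0 1 - 1/4) - (q 1 0 - 1/4) + (q 1 1 - 1/4) ≤ 1/2)
    (c6 : -(q 0 0 - 1/4) - (q 0 1 - 1/4) + (q 1 0 - 1/4) - (q 1 1 - 1/4) ≤ 1/2)
    (c7 : -(q 0 0 - 1/4) + (q 0 1 - 1/4) - (q 1 0 - 1/4) - (q 1 1 - 1/4) ≤ 1/2)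
    (c8 : (q 0 0 - 1/4) - (q 0 1 - 1/4) - (q 1 0 - 1/4) - (q 1 1 - 1/4) ≤ 1/2) :
    |CC q true true| + |CC q true false| + |CC q false true| + |CC q false false| ≤ 4 := by
  have e1 : CC q true true = (4*q 0 0 - 1) + (4*q 0 1 - 1) + (4*q 1 0 - 1) + (4*q 1 1 - 1) := by
    simp [CC]
  have e2 : CC q true false = (4*q 0 0 - 1) - (4*q 0 1 - 1) + (4*q 1 0 - 1) - (4*q 1 1 - 1) := by
    simp [CC]; ring
  have e3 : CC q false true = (4*q 0 0 - 1) + (4*q 0 1 - 1) - (4*q 1 0 - 1) - (4*q 1 1 - 1) := by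
    simp [CC]; ring
  have e4 : CC q false false = (4*q 0 0 - 1) - (4*q 0 1 - 1) - (4*q 1 0 - 1) + (4*q 1 1 - 1) := by
    simp [CC]; ring
  obtain ⟨b1, b1'⟩ := hbox 0 0
  obtain ⟨b2, b2'⟩ := hbox 0 1
  obtain ⟨b3, b3'⟩ := hbox 1 0
  obtain ⟨b4, b4'⟩ := hbox 1 1
  rcases abs_cases (CC q true true) with ⟨h1, _⟩ | ⟨h1, _⟩ <;>
    rcases abs_cases (CC q true false) with ⟨h2, _⟩ | ⟨h2, _⟩ <;>
      rcases abs_cases (CC q false true) with ⟨h3, _⟩ | ⟨h3, _⟩ <;>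
        rcases abs_cases (CC q false false) with ⟨h4, _⟩ | ⟨h4, _⟩ <;>
          rw [h1, h2, h3, h4] <;> linarith

end Fine

noncomputable def qd (p : Fin 2 → Fin 2 → ℝ) (s₀ : Fin 2 → Fin 2 → Bool) :
    Fin 2 → Fin 2 → ℝ := fun i j =>
  if ![![true, s₀ 0 0], ![s₀ 1 0, s₀ 0 1 == s₀ 1 1]] i j then p i j else 1/2 - p i j

def H2 (s₀ : Fin 2 → Fin 2 → Bool) (t : T4) : Hsp :=
  ![ ![ ![t.1, t.1.xor (!s₀ 0 0)], ![t.2.1, (t.2.1).xor (!s₀ 0 1)] ],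
     ![ ![t.2.2.1, t.2.2.2], ![(t.2.2.1).xor (!s₀ 1 0), (t.2.2.2).xor (!s₀ 1 1)] ] ]

lemma L2 (p ε : Fin 2 → Fin 2 → ℝ) (s₀ : Fin 2 → Fin 2 → Bool)
    (hp : ∀ i j, p i j ∈ Set.Icc (0:ℝ) (1/2))
    (heven : Even (plusCount s₀))
    (hval : ∀ k i, ε k i = if s₀ k i then (1/2:ℝ) else 0)
    (hch : ∀ s, ¬ Even (plusCount s) → Sval p s ≤ 1/2) :
    ELFP p ε := by
  -- the eight CHSH inequalities for p
  have cp1 : (p 0 0 - 1/4) + (p 0 1 - 1/4) + (p 1 0 - 1/4) - (p 1 1 - 1/4) ≤ 1/2 := by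
    have := hch (fun i j => ![![true, true], ![true, false]] i j) (by decide)
    rw [Sval_expand] at this
    norm_num [Matrix.cons_val_zero, Matrix.cons_val_one, Matrix.head_cons] at this
    linarith
  have cp2 : (p 0 0 - 1/4) + (p 0 1 - 1/4) - (p 1 0 - 1/4) + (p 1 1 - 1/4) ≤ 1/2 := by
    have := hch (fun i j => ![![true, true], ![false, true]] i j) (by decide)
    rw [Sval_expand] at this
    norm_num [Matrix.cons_val_zero, Matrix.cons_val_one, Matrix.head_cons] at this
    linarith
  have cp3 : (p 0 0 - 1/4) - (p 0 1 - 1/4) + (p 1 0 - 1/4) + (p 1 1 - 1/4) ≤ 1/2 := by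
    have := hch (fun i j => ![![true, false], ![true, true]] i j) (by decide)
    rw [Sval_expand] at this
    norm_num [Matrix.cons_val_zero, Matrix.cons_val_one, Matrix.head_cons] at this
    linarith
  have cp4 : -(p 0 0 - 1/4) + (p 0 1 - 1/4) + (p 1 0 - 1/4) + (p 1 1 - 1/4) ≤ 1/2 := by
    have := hch (fun i j => ![![false, true], ![true, true]] i j) (by decide)
    rw [Sval_expand] at this
    norm_num [Matrix.cons_val_zero, Matrix.cons_val_one, Matrix.head_cons] at this
    linarith
  have cp5 : -(p 0 0 - 1/4) - (p 0 1 - 1/4) - (p 1 0 - 1/4) + (p 1 1 - 1/4) ≤ 1/2 := by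
    have := hch (fun i j => ![![false, false], ![false, true]] i j) (by decide)
    rw [Sval_expand] at this
    norm_num [Matrix.cons_val_zero, Matrix.cons_val_one, Matrix.head_cons] at this
    linarith
  have cp6 : -(p 0 0 - 1/4) - (p 0 1 - 1/4) + (p 1 0 - 1/4) - (p 1 1 - 1/4) ≤ 1/2 := by
    have := hch (fun i j => ![![false, false], ![true, false]] i j) (by decide)
    rw [Sval_expand] at this
    norm_num [Matrix.cons_val_zero, Matrix.cons_val_one, Matrix.head_cons] at this
    linarith
  have cp7 : -(p 0 0 - 1/4) + (p 0 1 - 1/4) - (p 1 0 - 1/4) - (p 1 1 - 1/4) ≤ 1/2 := by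
    have := hch (fun i j => ![![false, true], ![false, false]] i j) (by decide)
    rw [Sval_expand] at this
    norm_num [Matrix.cons_val_zero, Matrix.cons_val_one, Matrix.head_cons] at this
    linarith
  have cp8 : (p 0 0 - 1/4) - (p 0 1 - 1/4) - (p 1 0 - 1/4) - (p 1 1 - 1/4) ≤ 1/2 := by
    have := hch (fun i j => ![![true, false], ![false, false]] i j) (by decide)
    rw [Sval_expand] at this
    norm_num [Matrix.cons_val_zero, Matrix.cons_val_one, Matrix.head_cons] at this
    linarith
  have hbox : ∀ i j, 0 ≤ qd p s₀ i j ∧ qd p s₀ i j ≤ 1/2 := by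
    intro i j
    obtain ⟨hb1, hb2⟩ := hp i j
    unfold qd
    constructor <;> (split <;> linarith)
  have hq : |CC (qd p s₀) true true| + |CC (qd p s₀) true false|
      + |CC (qd p s₀) false true| + |CC (qd p s₀) false false| ≤ 4 := by
    rw [plusCount_eq] at heven
    cases hs1 : s₀ 0 0 <;> cases hs2 : s₀ 0 1 <;> cases hs3 : s₀ 1 0 <;> cases hs4 : s₀ 1 1 <;>
      rw [hs1, hs2, hs3, hs4] at heven <;>
      first
        | exact absurd heven (by decide)
        | (refine CHSHq (qd p s₀) hbox ?_ ?_ ?_ ?_ ?_ ?_ ?_ ?_ <;>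
           · simp only [qd, hs1, hs2, hs3, hs4, Matrix.cons_val_zero, Matrix.cons_val_one,
               Matrix.head_cons]
             norm_num
             linarith [cp1, cp2, cp3, cp4, cp5, cp6, cp7, cp8])
  refine ⟨fun h => ∑ t : T4, if H2 s₀ t = h then nu (qd p s₀) t else 0, ?_, ?_, ?_, ?_, ?_, ?_⟩
  · intro h
    exact Finset.sum_nonneg fun t _ => by
      split
      · exact nu_nonneg (qd p s₀) hq t
      · exact le_refl 0
  · beta_reduce
    rw [bridge_tot]
    exact nu_total (qd p s₀)
  · intro k i j
    fin_cases k <;> fin_cases i <;> fin_cases j <;>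
      (cases hs1 : s₀ 0 0 <;> cases hs2 : s₀ 0 1 <;> cases hs3 : s₀ 1 0 <;> cases hs4 : s₀ 1 1 <;>
       · beta_reduce
         rw [bridge]
         simp only [H2, Fin.mk_zero, Fin.mk_one, Matrix.cons_val_zero, Matrix.cons_val_one,
           Matrix.head_cons, hs1, hs2, hs3, hs4, Bool.not_true, Bool.not_false, Bool.xor_false,
           Bool.xor_true, Bool.not_eq_true', nu_a0, nu_a1, nu_b0, nu_b1])
  · intro i j
    fin_cases i <;> fin_cases j <;>
      (cases hs1 : s₀ 0 0 <;> cases hs2 : s₀ 0 1 <;> cases hs3 : s₀ 1 0 <;> cases hs4 : s₀ 1 1 <;>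
       · beta_reduce
         rw [bridge]
         simp only [H2, Fin.mk_zero, Fin.mk_one, Matrix.cons_val_zero, Matrix.cons_val_one,
           Matrix.head_cons, hs1, hs2, hs3, hs4, Bool.not_true, Bool.not_false, Bool.xor_false,
           Bool.xor_true, Bool.not_eq_true', nu_a0b0, nu_a0b1, nu_a1b0, nu_a1b1]
         simp only [qd, hs1, hs2, hs3, hs4, Matrix.cons_val_zero, Matrix.cons_val_one,
           Matrix.head_cons]
         norm_num)
  · intro i
    fin_cases i <;>
      (cases hs1 : s₀ 0 0 <;> cases hs2 : s₀ 0 1 <;>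
       · beta_reduce
         rw [bridge]
         simp only [H2, Fin.mk_zero, Fin.mk_one, Matrix.cons_val_zero, Matrix.cons_val_one,
           Matrix.head_cons, hs1, hs2, Bool.not_true, Bool.not_false, Bool.xor_false,
           Bool.xor_true, Bool.not_eq_true', and_self, nu_a0, nu_a1,
           nu_zero_a0, nu_zero_a1, hval]
         try norm_num)
  · intro j
    fin_cases j <;>
      (cases hs3 : s₀ 1 0 <;> cases hs4 : s₀ 1 1 <;>
       · beta_reduce
         rw [bridge]
         simp only [H2, Fin.mk_zero, Fin.mk_one, Matrix.cons_val_zero, Matrix.cons_val_one,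
           Matrix.head_cons, hs3, hs4, Bool.not_true, Bool.not_false, Bool.xor_false,
           Bool.xor_true, Bool.not_eq_true', and_self, nu_b0, nu_b1,
           nu_zero_b0, nu_zero_b1, hval]
         try norm_num)

lemma cnv_mem {a b : ℝ} (h0a : 0 ≤ a) (h1a : a ≤ 1) (h0b : 0 ≤ b) (h1b : b ≤ 1) :
    0 ≤ cnv a b ∧ cnv a b ≤ 1 := by
  unfold cnv; constructor <;> nlinarith

lemma cnv_eq_zero {a b : ℝ} (h0a : 0 ≤ a) (h1a : a ≤ 1) (h0b : 0 ≤ b) (h1b : b ≤ 1)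
    (h : cnv a b = 0) : (a = 0 ∧ b = 0) ∨ (a = 1 ∧ b = 1) := by
  have t1 : (0:ℝ) ≤ a * (1 - b) := mul_nonneg h0a (by linarith)
  have t2 : (0:ℝ) ≤ b * (1 - a) := mul_nonneg h0b (by linarith)
  have hsum : a * (1 - b) + b * (1 - a) = 0 := by
    unfold cnv at h; linear_combination h
  have k1 : a * (1 - b) = 0 := by linarith
  have k2 : b * (1 - a) = 0 := by linarith
  rcases mul_eq_zero.mp k1 with ha | hb <;> rcases mul_eq_zero.mp k2 with hb' | ha'
  · exact Or.inl ⟨ha, hb'⟩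
  · exfalso; linarith
  · exfalso; linarith
  · exact Or.inr ⟨by linarith, by linarith⟩

lemma cnv_eq_one {a b : ℝ} (h0a : 0 ≤ a) (h1a : a ≤ 1) (h0b : 0 ≤ b) (h1b : b ≤ 1)
    (h : cnv a b = 1) : (a = 0 ∧ b = 1) ∨ (a = 1 ∧ b = 0) := by
  have t1 : (0:ℝ) ≤ (1 - a) * (1 - b) := mul_nonneg (by linarith) (by linarith)
  have t2 : (0:ℝ) ≤ a * b := mul_nonneg h0a h0b
  have hsum : (1 - a) * (1 - b) + a * b = 0 := by
    unfold cnv at h; linear_combination -h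
  have k1 : (1 - a) * (1 - b) = 0 := by linarith
  have k2 : a * b = 0 := by linarith
  rcases mul_eq_zero.mp k1 with ha | hb <;> rcases mul_eq_zero.mp k2 with ha' | hb'
  · exfalso; linarith
  · exact Or.inr ⟨by linarith, hb'⟩
  · exact Or.inl ⟨ha', by linarith⟩
  · exfalso; linarith

lemma memS0_of_dd (ε : Fin 2 → Fin 2 → ℝ) (c : Fin 2 → Fin 2 → Bool)
    (heven : Even (plusCount c))
    (hv : ∀ k i, dd ε k i = if c k i then 0 else 1) : memS0 ε 1 := by
  have hval : ∀ k i, ε k i = if c k i then (1/2:ℝ) else 0 := by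
    intro k i
    have hk := hv k i
    unfold dd at hk
    cases hc : c k i <;> rw [hc] at hk <;> simp_all <;> linarith
  refine ⟨c, heven, ?_⟩
  rw [Sval_expand, hval 0 0, hval 0 1, hval 1 0, hval 1 1]
  cases hc1 : c 0 0 <;> cases hc2 : c 0 1 <;> cases hc3 : c 1 0 <;> cases hc4 : c 1 1 <;>
    norm_num

lemma extremal (ε : Fin 2 → Fin 2 → ℝ) (hε : ∀ k i, ε k i ∈ Set.Icc (0:ℝ) (1/2))
    (s₀ : Fin 2 → Fin 2 → Bool) (h1 : Sval ε s₀ = 1) :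
    ∀ k i, ε k i = if s₀ k i then (1/2:ℝ) else 0 := by
  rw [Sval_expand] at h1
  have bd : ∀ (b : Bool) (x : ℝ), 0 ≤ x → x ≤ 1/2 →
      (if b = true then (1:ℝ) else -1) * (x - 1/4) ≤ 1/4 := by
    intro b x h0 h2; cases b <;> simp <;> linarith
  have b00 := bd (s₀ 0 0) (ε 0 0) (hε 0 0).1 (hε 0 0).2
  have b01 := bd (s₀ 0 1) (ε 0 1) (hε 0 1).1 (hε 0 1).2
  have b10 := bd (s₀ 1 0) (ε 1 0) (hε 1 0).1 (hε 1 0).2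
  have b11 := bd (s₀ 1 1) (ε 1 1) (hε 1 1).1 (hε 1 1).2
  have e00 : (if s₀ 0 0 = true then (1:ℝ) else -1) * (ε 0 0 - 1/4) = 1/4 := by linarith
  have e01 : (if s₀ 0 1 = true then (1:ℝ) else -1) * (ε 0 1 - 1/4) = 1/4 := by linarith
  have e10 : (if s₀ 1 0 = true then (1:ℝ) else -1) * (ε 1 0 - 1/4) = 1/4 := by linarith
  have e11 : (if s₀ 1 1 = true then (1:ℝ) else -1) * (ε 1 1 - 1/4) = 1/4 := by linarith
  have E00 : ε 0 0 = if s₀ 0 0 then (1/2:ℝ) else 0 := by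
    cases hs : s₀ 0 0 <;> rw [hs] at e00 <;> norm_num at e00 ⊢ <;> linarith
  have E01 : ε 0 1 = if s₀ 0 1 then (1/2:ℝ) else 0 := by
    cases hs : s₀ 0 1 <;> rw [hs] at e01 <;> norm_num at e01 ⊢ <;> linarith
  have E10 : ε 1 0 = if s₀ 1 0 then (1/2:ℝ) else 0 := by
    cases hs : s₀ 1 0 <;> rw [hs] at e10 <;> norm_num at e10 ⊢ <;> linarith
  have E11 : ε 1 1 = if s₀ 1 1 then (1/2:ℝ) else 0 := by
    cases hs : s₀ 1 1 <;> rw [hs] at e11 <;> norm_num at e11 ⊢ <;> linarith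
  intro k i
  fin_cases k <;> fin_cases i
  · exact E00
  · exact E01
  · exact E10
  · exact E11


/-- the Equi set for the classical ("class") constraint:
for every `p ∈ [0,1/2]⁴`, the Bell/CHSH inequalities `max S₁p ≤ 1/2` hold iff
`(p, ε) ∈ ELFP`, if and only if `1 ∈ S₀ε`. -/
theorem equi_class
    (ε : Fin 2 → Fin 2 → ℝ)
    (hε : ∀ k i, ε k i ∈ Set.Icc (0 : ℝ) (1 / 2)) :
    (∀ p : Fin 2 → Fin 2 → ℝ, (∀ i j, p i j ∈ Set.Icc (0 : ℝ) (1 / 2)) →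
        (maxS1 p ≤ 1 / 2 ↔ ELFP p ε)) ↔
      memS0 ε 1 := by
  constructor
  · intro Hiff
    by_contra hmem
    have hd1 := hε 1 0
    have hd2 := hε 0 0
    have hd3 := hε 1 1
    have hd4 := hε 0 1
    have hb1 : 0 ≤ dd ε 1 0 ∧ dd ε 1 0 ≤ 1 := by unfold dd; constructor <;> [linarith [hd1.2]; linarith [hd1.1]]
    have hb2 : 0 ≤ dd ε 0 0 ∧ dd ε 0 0 ≤ 1 := by unfold dd; constructor <;> [linarith [hd2.2]; linarith [hd2.1]]
    have hb3 : 0 ≤ dd ε 1 1 ∧ dd ε 1 1 ≤ 1 := by unfold dd; constructor <;> [linarith [hd3.2]; linarith [hd3.1]]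
    have hb4 : 0 ≤ dd ε 0 1 ∧ dd ε 0 1 ≤ 1 := by unfold dd; constructor <;> [linarith [hd4.2]; linarith [hd4.1]]
    have hb12 := cnv_mem hb1.1 hb1.2 hb2.1 hb2.2
    have hb123 := cnv_mem hb12.1 hb12.2 hb3.1 hb3.2
    have hbD := cnv_mem hb123.1 hb123.2 hb4.1 hb4.2
    have hPin : ∀ i j : Fin 2,
        (fun i j => if i = 1 ∧ j = 1 then (1 - DD ε)/2 else (1/2 : ℝ)) i j
          ∈ Set.Icc (0:ℝ) (1/2) := by
      intro i j
      have hDb : 0 ≤ DD ε ∧ DD ε ≤ 1 := hbD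
      dsimp only
      split
      · constructor <;> [linarith [hDb.2]; linarith [hDb.1]]
      · constructor <;> norm_num
    have hBell := (Hiff _ hPin).mpr (L3 ε hε)
    have hmemf : (fun i j : Fin 2 => !(decide (i = 1) && decide (j = 1)))
        ∈ Finset.univ.filter (fun s : Fin 2 → Fin 2 → Bool => ¬ Even (plusCount s)) := by
      simp only [Finset.mem_filter, Finset.mem_univ, true_and]
      decide
    have hle := Finset.le_sup' (f := Sval (fun i j => if i = 1 ∧ j = 1 then (1 - DD ε)/2 else (1/2 : ℝ))) hmemf
    have hSv : Sval (fun i j => if i = 1 ∧ j = 1 then (1 - DD ε)/2 else (1/2 : ℝ))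
        (fun i j : Fin 2 => !(decide (i = 1) && decide (j = 1))) = 1/2 + DD ε / 2 := by
      rw [Sval_expand]
      norm_num
      ring
    have hD0 : DD ε = 0 := by
      have h2 : maxS1 (fun i j => if i = 1 ∧ j = 1 then (1 - DD ε)/2 else (1/2 : ℝ)) ≤ 1/2 := hBell
      have h3 := le_trans hle h2
      rw [hSv] at h3
      have hDDb : 0 ≤ DD ε := by unfold DD; exact hbD.1
      linarith [hDDb]
    unfold DD at hD0
    rcases cnv_eq_zero hb123.1 hb123.2 hb4.1 hb4.2 hD0 with ⟨hA, h4⟩ | ⟨hA, h4⟩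
    · rcases cnv_eq_zero hb12.1 hb12.2 hb3.1 hb3.2 hA with ⟨hB, h3⟩ | ⟨hB, h3⟩
      · rcases cnv_eq_zero hb1.1 hb1.2 hb2.1 hb2.2 hB with ⟨h1, h2⟩ | ⟨h1, h2⟩
        · -- (0,0,0,0) : all ε = 1/2 : c = all true
          exact hmem (memS0_of_dd ε (fun k i => ![![true, true], ![true, true]] k i)
            (by decide) (by
              intro k i; fin_cases k <;> fin_cases i <;>
                simp only [Matrix.cons_val_zero, Matrix.cons_val_one, Matrix.head_cons,
                  if_true] <;> first | exact h1 | exact h2 | exact h3 | exact h4))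
        · -- (1,1,0,0) : c00=false c10=false c11=true c01=true
          exact hmem (memS0_of_dd ε (fun k i => ![![false, true], ![false, true]] k i)
            (by decide) (by
              intro k i; fin_cases k <;> fin_cases i <;>
                simp only [Matrix.cons_val_zero, Matrix.cons_val_one, Matrix.head_cons,
                  if_true, Bool.false_eq_true, if_false] <;>
                first | exact h1 | exact h2 | exact h3 | exact h4))
      · rcases cnv_eq_one hb1.1 hb1.2 hb2.1 hb2.2 hB with ⟨h1, h2⟩ | ⟨h1, h2⟩
        · -- (0,1,1,0): d1=0,d2=1,d3=1,d4=0: c10=true c00=false c11=false c01=true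
          exact hmem (memS0_of_dd ε (fun k i => ![![false, true], ![true, false]] k i)
            (by decide) (by
              intro k i; fin_cases k <;> fin_cases i <;>
                simp only [Matrix.cons_val_zero, Matrix.cons_val_one, Matrix.head_cons,
                  if_true, Bool.false_eq_true, if_false] <;>
                first | exact h1 | exact h2 | exact h3 | exact h4))
        · -- (1,0,1,0): c10=false c00=true c11=false c01=true
          exact hmem (memS0_of_dd ε (fun k i => ![![true, true], ![false, false]] k i)
            (by decide) (by
              intro k i; fin_cases k <;> fin_cases i <;>
                simp only [Matrix.cons_val_zero, Matrix.cons_val_one, Matrix.head_cons,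
                  if_true, Bool.false_eq_true, if_false] <;>
                first | exact h1 | exact h2 | exact h3 | exact h4))
    · rcases cnv_eq_one hb12.1 hb12.2 hb3.1 hb3.2 hA with ⟨hB, h3⟩ | ⟨hB, h3⟩
      · rcases cnv_eq_zero hb1.1 hb1.2 hb2.1 hb2.2 hB with ⟨h1, h2⟩ | ⟨h1, h2⟩
        · -- (0,0,1,1): c10=true c00=true c11=false c01=false
          exact hmem (memS0_of_dd ε (fun k i => ![![true, false], ![true, false]] k i)
            (by decide) (by
              intro k i; fin_cases k <;> fin_cases i <;>
                simp only [Matrix.cons_val_zero, Matrix.cons_val_one, Matrix.head_cons,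
                  if_true, Bool.false_eq_true, if_false] <;>
                first | exact h1 | exact h2 | exact h3 | exact h4))
        · -- (1,1,1,1): all false
          exact hmem (memS0_of_dd ε (fun k i => ![![false, false], ![false, false]] k i)
            (by decide) (by
              intro k i; fin_cases k <;> fin_cases i <;>
                simp only [Matrix.cons_val_zero, Matrix.cons_val_one, Matrix.head_cons,
                  if_true, Bool.false_eq_true, if_false] <;>
                first | exact h1 | exact h2 | exact h3 | exact h4))
      · rcases cnv_eq_one hb1.1 hb1.2 hb2.1 hb2.2 hB with ⟨h1, h2⟩ | ⟨h1, h2⟩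
        · -- (0,1,0,1): d1=0,d2=1,d3=0,d4=1: c10=true c00=false c11=true c01=false
          exact hmem (memS0_of_dd ε (fun k i => ![![false, false], ![true, true]] k i)
            (by decide) (by
              intro k i; fin_cases k <;> fin_cases i <;>
                simp only [Matrix.cons_val_zero, Matrix.cons_val_one, Matrix.head_cons,
                  if_true, Bool.false_eq_true, if_false] <;>
                first | exact h1 | exact h2 | exact h3 | exact h4))
        · -- (1,0,0,1): c10=false c00=true c11=true c01=false
          exact hmem (memS0_of_dd ε (fun k i => ![![true, false], ![false, true]] k i)
            (by decide) (by
              intro k i; fin_cases k <;> fin_cases i <;>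
                simp only [Matrix.cons_val_zero, Matrix.cons_val_one, Matrix.head_cons,
                  if_true, Bool.false_eq_true, if_false] <;>
                first | exact h1 | exact h2 | exact h3 | exact h4))
  · rintro ⟨s₀, hs₀e, hs₀v⟩ p hp
    have hval := extremal ε hε s₀ hs₀v
    constructor
    · intro hBell
      refine L2 p ε s₀ hp hs₀e hval (fun s hs => ?_)
      have hmemf : s ∈ Finset.univ.filter
          (fun s : Fin 2 → Fin 2 → Bool => ¬ Even (plusCount s)) :=
        Finset.mem_filter.mpr ⟨Finset.mem_univ _, hs⟩
      exact le_trans (Finset.le_sup' (f := Sval p) hmemf) hBell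
    · intro hEL
      unfold maxS1
      refine Finset.sup'_le _ _ fun s hs => ?_
      have hodd : ¬ Even (plusCount s) := (Finset.mem_filter.mp hs).2
      have hpar : ¬ Even (plusCount s + plusCount s₀) := by
        rw [Nat.even_add]; tauto
      have hL := L1 p ε hEL s s₀ hpar
      linarith [hs₀v, hL]
end
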